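/- arXiv:1611.09643 — 13 statements merged into one kernel-verified Lean document; each statement's English description precedes it below -/
import Mathlib

section
/- Let S be a real n×n matrix (n ≥ 1) with ‖S‖∞ < 1, and let z, ĉ ∈ ℝⁿ satisfy z − S|z| = ĉ. Then there exists an index i ∈ [n] such that sign(z_i) = sign(ĉ_i). -/
/-!
Take an index `i` at which `|z i|` is maximal. Since the rows of `S` have absolute sum `< 1`,
`|(S *ᵥ |z|) i| ≤ (∑ j, |S i j|) * |z i|` is a strict fraction of `|z i|` (or zero), so subtracting
it from `z i` cannot change the sign: `c i = z i - (S *ᵥ |z|) i` has the sign of `z i`.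
-/

open Finset Matrix

theorem Real.sign_sub_eq_sign_of_abs_le_mul {a b r : ℝ} (hr : r < 1) (hb : |b| ≤ r * |a|) :
    Real.sign (a - b) = Real.sign a := by
  rcases lt_trichotomy a 0 with ha | rfl | ha
  · rw [abs_of_neg ha] at hb
    have : a < b := by nlinarith [neg_abs_le b]
    rw [Real.sign_of_neg ha, Real.sign_of_neg (by linarith)]
  · have : b = 0 := abs_nonpos_iff.mp (by simpa using hb)
    simp [this]
  · rw [abs_of_pos ha] at hb
    have : b < a := by nlinarith [le_abs_self b]
    rw [Real.sign_of_pos ha, Real.sign_of_pos (by linarith)]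

theorem Matrix.abs_mulVec_apply_le {m n : Type*} [Fintype n] (A : Matrix m n ℝ) {v : n → ℝ}
    {M : ℝ} (hv : ∀ j, |v j| ≤ M) (i : m) : |(A *ᵥ v) i| ≤ (∑ j, |A i j|) * M :=
  calc |(A *ᵥ v) i| = |∑ j, A i j * v j| := rfl
    _ ≤ ∑ j, |A i j| * |v j| := by
      simpa only [abs_mul] using abs_sum_le_sum_abs (fun j => A i j * v j) univ
    _ ≤ ∑ j, |A i j| * M := by gcongr with j; exact hv j
    _ = (∑ j, |A i j|) * M := (sum_mul _ _ _).symm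

theorem stmt_0 {n : ℕ} (hn : 1 ≤ n) (S : Matrix (Fin n) (Fin n) ℝ)
    (hS : ∀ i, ∑ j, |S i j| < 1) (z c : Fin n → ℝ)
    (h : z - S.mulVec (fun i => |z i|) = c) :
    ∃ i : Fin n, Real.sign (z i) = Real.sign (c i) := by
  obtain ⟨i, -, hi⟩ := exists_max_image univ (fun i => |z i|) ⟨⟨0, hn⟩, mem_univ _⟩
  have hbound : |(S *ᵥ fun j => |z j|) i| ≤ (∑ j, |S i j|) * |z i| :=
    S.abs_mulVec_apply_le (fun j => (abs_abs (z j)).trans_le (hi j (mem_univ j))) i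
  refine ⟨i, ?_⟩
  rw [← h, Pi.sub_apply, Real.sign_sub_eq_sign_of_abs_le_mul (hS i) hbound]
end

section
/- Let S be a real n×n matrix and let Σ₁, Σ₂ be signature matrices. Then the set of real numbers λ that are a real eigenvalue of Σ(Σ₁SΣ₂) for some signature matrix Σ is equal to the set of real numbers λ that are a real eigenvalue of ΣS for some signature matrix Σ. (This expresses the invariance ρ₀ˢ(Σ₁SΣ₂) = ρ₀ˢ(S) of the sign-real spectral radius.) -/
def IsSignature {n : ℕ} (M : Matrix (Fin n) (Fin n) ℝ) : Prop :=
  ∃ σ : Fin n → ℝ, (∀ i, σ i = 1 ∨ σ i = -1) ∧ M = Matrix.diagonal σ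

def IsRealEigenvalue {n : ℕ} (A : Matrix (Fin n) (Fin n) ℝ) (lam : ℝ) : Prop :=
  ∃ v : Fin n → ℝ, v ≠ 0 ∧ A.mulVec v = lam • v

/-! Both inclusions come from one observation: `E ↦ E₂ * E * E₁` maps signature matrices to
signature matrices, and `E₂ * (E * (E₁ * S * E₂)) * E₂ = (E₂ * E * E₁) * S`, so conjugating by
the involution `E₂` carries the eigenvectors of one side to those of the other. -/

namespace IsSignature

variable {n : ℕ} {A B : Matrix (Fin n) (Fin n) ℝ}

lemma mul (hA : IsSignature A) (hB : IsSignature B) : IsSignature (A * B) := by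
  obtain ⟨σ, hσ, rfl⟩ := hA
  obtain ⟨τ, hτ, rfl⟩ := hB
  refine ⟨σ * τ, fun i => ?_, Matrix.diagonal_mul_diagonal' σ τ⟩
  rcases hσ i with h | h <;> rcases hτ i with h' | h' <;> simp [h, h']

lemma mul_self (hA : IsSignature A) : A * A = 1 := by
  obtain ⟨σ, hσ, rfl⟩ := hA
  rw [Matrix.diagonal_mul_diagonal, ← Matrix.diagonal_one]
  congr 1
  funext i
  rcases hσ i with h | h <;> simp [h]

end IsSignature

lemma IsRealEigenvalue.conj {n : ℕ} {A P Q : Matrix (Fin n) (Fin n) ℝ} {lam : ℝ}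
    (hQP : Q * P = 1) (h : IsRealEigenvalue A lam) : IsRealEigenvalue (P * A * Q) lam := by
  obtain ⟨v, hv, hAv⟩ := h
  refine ⟨P.mulVec v, fun hPv => hv ?_, ?_⟩
  · rw [← Matrix.one_mulVec v, ← hQP, ← Matrix.mulVec_mulVec, hPv, Matrix.mulVec_zero]
  · rw [← Matrix.mulVec_mulVec, Matrix.mulVec_mulVec v Q P, hQP, Matrix.one_mulVec,
      ← Matrix.mulVec_mulVec, hAv, Matrix.mulVec_smul]

theorem stmt_1 {n : ℕ} (S E₁ E₂ : Matrix (Fin n) (Fin n) ℝ)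
    (h₁ : IsSignature E₁) (h₂ : IsSignature E₂) :
    {lam : ℝ | ∃ E, IsSignature E ∧ IsRealEigenvalue (E * (E₁ * S * E₂)) lam} =
      {lam : ℝ | ∃ E, IsSignature E ∧ IsRealEigenvalue (E * S) lam} := by
  ext lam
  constructor
  · rintro ⟨E, hE, hev⟩
    refine ⟨E₂ * E * E₁, (h₂.mul hE).mul h₁, ?_⟩
    have hsim : E₂ * E * E₁ * S = E₂ * (E * (E₁ * S * E₂)) * E₂ := by
      simp only [Matrix.mul_assoc, h₂.mul_self, Matrix.mul_one]
    rw [hsim]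
    exact hev.conj h₂.mul_self
  · rintro ⟨E, hE, hev⟩
    refine ⟨E₂ * E * E₁, (h₂.mul hE).mul h₁, ?_⟩
    have hsim : E₂ * E * E₁ * (E₁ * S * E₂) = E₂ * (E * S) * E₂ := by
      simp only [Matrix.mul_assoc]
      rw [← Matrix.mul_assoc E₁ E₁, h₁.mul_self, Matrix.one_mul]
    rw [hsim]
    exact hev.conj h₂.mul_self
end

section
/- Let S be a real n×n matrix. Then every real eigenvalue λ of ΣS, for every signature matrix Σ, satisfies |λ| < 1 if and only if det(I − SΣ) > 0 for every signature matrix Σ. (This is the equivalence ρ₀ˢ(S) < 1 ⇔ det(I − SΣ) > 0 for all signatures Σ.) -/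
/-!
If `det (1 - S Σ) ≤ 0` for a signature `Σ`, the intermediate value theorem applied to
`t ↦ det (1 - t • S Σ)` on `[0, 1]` produces a real eigenvalue `1 / t ≥ 1` of `S Σ`, hence of
`Σ S = Σ (S Σ) Σ`. Conversely, a real eigenvalue `λ` of `Σ S` with `|λ| ≥ 1` makes
`det (1 - S D) = 0` for the diagonal matrix `D = λ⁻¹ Σ`, whose entries lie in `[-1, 1]`.
Since `d ↦ det (1 - S diag d)` is affine in each coordinate, its minimum over the cube
`[-1, 1]ⁿ` is attained at a vertex, i.e. at a signature, where the determinant is then `≤ 0`.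
-/

open Matrix Function

section Multiaffine

variable {ι : Type*} [Fintype ι] [DecidableEq ι]

theorem Matrix.exists_det_sub_mul_diagonal_update_eq {R : Type*} [CommRing R]
    (A B : Matrix ι ι R) (σ : ι → R) (i : ι) :
    ∃ a b : R, ∀ t, (A - B * diagonal (update σ i t)).det = a + b * t := by
  set M := A - B * diagonal σ
  have hcol : ∀ t, A - B * diagonal (update σ i t) =
      M.updateCol i ((fun j => A j i) + (-t) • fun j => B j i) := by
    intro t
    ext j k
    by_cases hk : k = i
    · subst hk
      simp only [updateCol_self, sub_apply, mul_diagonal, update_self, Pi.add_apply,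
        Pi.smul_apply, smul_eq_mul]
      ring
    · simp [M, updateCol_ne hk, mul_diagonal, update_of_ne hk]
  refine ⟨(M.updateCol i fun j => A j i).det, -(M.updateCol i fun j => B j i).det, fun t => ?_⟩
  rw [hcol, det_updateCol_add, det_updateCol_smul]
  ring

theorem exists_sign_mul_le_mul (b t : ℝ) (ht : |t| ≤ 1) :
    ∃ c : ℝ, (c = 1 ∨ c = -1) ∧ b * c ≤ b * t := by
  rw [abs_le] at ht
  rcases le_total 0 b with hb | hb
  · exact ⟨-1, Or.inr rfl, by nlinarith⟩
  · exact ⟨1, Or.inl rfl, by nlinarith⟩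

theorem exists_sign_vector_le_of_affine_update (f : (ι → ℝ) → ℝ)
    (hf : ∀ σ i, ∃ a b : ℝ, ∀ t, f (update σ i t) = a + b * t)
    (σ : ι → ℝ) (hσ : ∀ i, |σ i| ≤ 1) :
    ∃ τ : ι → ℝ, (∀ i, τ i = 1 ∨ τ i = -1) ∧ f τ ≤ f σ := by
  suffices ∀ s : Finset ι, ∀ σ : ι → ℝ, (∀ i, |σ i| ≤ 1) → (∀ i ∉ s, σ i = 1 ∨ σ i = -1) →
      ∃ τ : ι → ℝ, (∀ i, τ i = 1 ∨ τ i = -1) ∧ f τ ≤ f σ from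
    this Finset.univ σ hσ fun i hi => absurd (Finset.mem_univ i) hi
  intro s
  induction s using Finset.induction with
  | empty => exact fun σ _ hsign => ⟨σ, fun i => hsign i (Finset.notMem_empty i), le_rfl⟩
  | @insert i s _ ih =>
    intro σ hσ hsign
    obtain ⟨a, b, hab⟩ := hf σ i
    obtain ⟨c, hc, hbc⟩ := exists_sign_mul_le_mul b (σ i) (hσ i)
    have hfc : f (update σ i c) ≤ f σ := by
      have := hab (σ i)
      rw [update_eq_self] at this
      rw [hab, this]
      linarith
    have hc_abs : |c| ≤ 1 := by rcases hc with rfl | rfl <;> norm_num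
    obtain ⟨τ, hτ, hτle⟩ := ih (update σ i c)
      (fun j => by by_cases hj : j = i <;> simp [hj, hσ j, hc_abs])
      (fun j hj => by
        by_cases hji : j = i
        · simpa [hji] using hc
        · simpa [hji] using hsign j (by simp [hji, hj]))
    exact ⟨τ, hτ, hτle.trans hfc⟩

end Multiaffine

section Eigenvalues

variable {n : ℕ}

theorem IsSignature.mul_self_s3 {E : Matrix (Fin n) (Fin n) ℝ} (hE : IsSignature E) :
    E * E = 1 := by
  obtain ⟨σ, hσ, rfl⟩ := hE
  rw [diagonal_mul_diagonal, ← diagonal_one]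
  congr 1
  funext i
  rcases hσ i with h | h <;> simp [h]

theorem IsRealEigenvalue.conj_of_mul_self_eq_one {A E : Matrix (Fin n) (Fin n) ℝ} {lam : ℝ}
    (hE : E * E = 1) (h : IsRealEigenvalue A lam) : IsRealEigenvalue (E * A * E) lam := by
  obtain ⟨v, hv0, hv⟩ := h
  refine ⟨E *ᵥ v, fun hEv => hv0 ?_, ?_⟩
  · rw [← one_mulVec v, ← hE, ← mulVec_mulVec, hEv, mulVec_zero]
  · rw [mulVec_mulVec, mul_assoc, hE, mul_one, ← mulVec_mulVec, hv, mulVec_smul]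

theorem isRealEigenvalue_iff_det_one_sub_inv_smul {A : Matrix (Fin n) (Fin n) ℝ} {lam : ℝ}
    (hlam : lam ≠ 0) : IsRealEigenvalue A lam ↔ (1 - lam⁻¹ • A).det = 0 := by
  rw [← exists_mulVec_eq_zero_iff]
  refine exists_congr fun v => and_congr_right fun _ => ?_
  rw [sub_mulVec, one_mulVec, smul_mulVec, sub_eq_zero, eq_inv_smul_iff₀ hlam, eq_comm]

theorem exists_one_le_isRealEigenvalue_of_det_one_sub_nonpos {A : Matrix (Fin n) (Fin n) ℝ}
    (hA : (1 - A).det ≤ 0) : ∃ lam, 1 ≤ lam ∧ IsRealEigenvalue A lam := by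
  set g : ℝ → ℝ := fun t => (1 - t • A).det
  have hg : Continuous g := by fun_prop
  have hg0 : g 0 = 1 := by simp [g]
  obtain ⟨t, ⟨ht0, ht1⟩, hgt⟩ := intermediate_value_Icc' zero_le_one hg.continuousOn
    ⟨by simpa [g] using hA, hg0.ge.trans' zero_le_one⟩
  have htpos : 0 < t := ht0.lt_of_ne (by rintro rfl; simp [hg0] at hgt)
  refine ⟨t⁻¹, one_le_inv₀ htpos |>.mpr ht1, ?_⟩
  rw [isRealEigenvalue_iff_det_one_sub_inv_smul (inv_ne_zero htpos.ne'), inv_inv]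
  exact hgt

theorem exists_sign_det_one_sub_mul_diagonal_nonpos {S : Matrix (Fin n) (Fin n) ℝ}
    {σ : Fin n → ℝ} (hσ : ∀ i, σ i = 1 ∨ σ i = -1) {lam : ℝ}
    (hlam : IsRealEigenvalue (S * diagonal σ) lam) (hlam_abs : 1 ≤ |lam|) :
    ∃ τ : Fin n → ℝ, (∀ i, τ i = 1 ∨ τ i = -1) ∧ (1 - S * diagonal τ).det ≤ 0 := by
  have hlam0 : lam ≠ 0 := by rintro rfl; norm_num at hlam_abs
  have hdet : (1 - S * diagonal (lam⁻¹ • σ)).det = 0 := by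
    rw [diagonal_smul, Matrix.mul_smul]
    exact (isRealEigenvalue_iff_det_one_sub_inv_smul hlam0).mp hlam
  have hcube : ∀ i, |(lam⁻¹ • σ) i| ≤ 1 := fun i => by
    rcases hσ i with h | h <;> simpa [h, abs_inv] using inv_le_one_of_one_le₀ hlam_abs
  obtain ⟨τ, hτ, hle⟩ := exists_sign_vector_le_of_affine_update
    (fun d => (1 - S * diagonal d).det)
    (fun d i => exists_det_sub_mul_diagonal_update_eq 1 S d i) _ hcube
  exact ⟨τ, hτ, hle.trans hdet.le⟩

end Eigenvalues

theorem stmt_3 {n : ℕ} (S : Matrix (Fin n) (Fin n) ℝ) :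
    (∀ E, IsSignature E → ∀ lam : ℝ, IsRealEigenvalue (E * S) lam → |lam| < 1) ↔
      (∀ E : Matrix (Fin n) (Fin n) ℝ, IsSignature E → 0 < (1 - S * E).det) := by
  constructor
  · intro hev E hE
    by_contra! hdet
    obtain ⟨lam, hlam1, hlam⟩ := exists_one_le_isRealEigenvalue_of_det_one_sub_nonpos hdet
    have hES : IsRealEigenvalue (E * S) lam := by
      simpa [mul_assoc, hE.mul_self_s3] using hlam.conj_of_mul_self_eq_one hE.mul_self_s3
    exact (hev E hE lam hES).not_ge (hlam1.trans (le_abs_self lam))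
  · intro hdet E hE lam hlam
    by_contra! hlam_abs
    have hSE : IsRealEigenvalue (S * E) lam := by
      simpa [← mul_assoc, hE.mul_self_s3] using hlam.conj_of_mul_self_eq_one hE.mul_self_s3
    obtain ⟨σ, hσ, rfl⟩ := hE
    obtain ⟨τ, hτ, hle⟩ := exists_sign_det_one_sub_mul_diagonal_nonpos hσ hSE hlam_abs
    exact (hdet _ ⟨τ, hτ, rfl⟩).not_ge hle
end

section
/- Let S be a real n×n matrix. Then det(I − SΣ) > 0 for every signature matrix Σ if and only if det(I − SD) > 0 for every real diagonal n×n matrix D all of whose diagonal entries have absolute value at most 1. -/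
/-! The map `d ↦ det (1 - S * diagonal d)` is affine in each coordinate `d i`, since only
column `i` of the matrix depends on it, namely as `Pi.single i 1 - d i • (S · i)`. A function
that is concave in each coordinate attains its minimum over each coordinate segment of the cube
`[-1, 1]ⁿ` at an endpoint, so pushing the coordinates one at a time to `±1` reduces positivity
on the cube to positivity at its vertices, the signature matrices. -/

open Function Matrix Set

theorem pos_on_cube_of_concaveOn_update_of_pos_on_vertices {ι : Type*} [Fintype ι]
    [DecidableEq ι] {f : (ι → ℝ) → ℝ} (hf : ∀ d i, ConcaveOn ℝ (Icc (-1) 1) fun t => f (update d i t))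
    (hvert : ∀ d : ι → ℝ, (∀ i, d i = 1 ∨ d i = -1) → 0 < f d)
    {d : ι → ℝ} (hd : ∀ i, |d i| ≤ 1) : 0 < f d := by
  suffices key : ∀ s : Finset ι, ∀ d : ι → ℝ, (∀ i, |d i| ≤ 1) →
      (∀ i ∉ s, d i = 1 ∨ d i = -1) → 0 < f d from
    key Finset.univ d hd (by simp)
  intro s
  induction s using Finset.induction_on with
  | empty => exact fun d _ hvd => hvert d fun i => hvd i (Finset.notMem_empty i)
  | insert a s _ ih =>
    intro d hd hvd
    have hupdate : ∀ t : ℝ, (t = 1 ∨ t = -1) → 0 < f (update d a t) := by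
      intro t ht
      refine ih _ (fun i => ?_) (fun i hi => ?_)
      · rcases eq_or_ne i a with rfl | hia
        · rcases ht with rfl | rfl <;> simp
        · simpa [update_of_ne hia] using hd i
      · rcases eq_or_ne i a with rfl | hia
        · simpa using ht
        · simpa [update_of_ne hia] using hvd i (by simp [hia, hi])
    have hmin := (hf d a).min_le_of_mem_Icc (x := -1) (y := 1) (z := d a) (by norm_num)
      (by norm_num) (abs_le.mp (hd a))
    simp only [update_eq_self] at hmin
    exact (lt_min (hupdate (-1) (.inr rfl)) (hupdate 1 (.inl rfl))).trans_le hmin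

section

variable {n : Type*} [Fintype n] [DecidableEq n] (S : Matrix n n ℝ) (d : n → ℝ) (i : n)

theorem one_sub_mul_diagonal_update (t : ℝ) :
    1 - S * diagonal (update d i t) =
      updateCol (1 - S * diagonal d) i (Pi.single i 1 - t • fun k => S k i) := by
  ext k j
  rcases eq_or_ne j i with rfl | hji
  · simp [one_apply, Pi.single_apply, mul_comm]
  · simp [hji]

theorem det_one_sub_mul_diagonal_update (t : ℝ) :
    (1 - S * diagonal (update d i t)).det =
      (updateCol (1 - S * diagonal d) i (Pi.single i 1)).det
        - t * (updateCol (1 - S * diagonal d) i fun k => S k i).det := by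
  rw [one_sub_mul_diagonal_update, sub_eq_add_neg (Pi.single i 1), ← neg_smul,
    det_updateCol_add, det_updateCol_smul]
  ring

theorem concaveOn_det_one_sub_mul_diagonal_update {s : Set ℝ} (hs : Convex ℝ s) :
    ConcaveOn ℝ s fun t => (1 - S * diagonal (update d i t)).det := by
  simp_rw [det_one_sub_mul_diagonal_update]
  exact (concaveOn_const _ hs).sub (((LinearMap.mul ℝ ℝ).flip _).convexOn hs)

end

theorem stmt_4 {n : ℕ} (S : Matrix (Fin n) (Fin n) ℝ) :
    (∀ E : Matrix (Fin n) (Fin n) ℝ, IsSignature E → 0 < (1 - S * E).det) ↔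
      (∀ d : Fin n → ℝ, (∀ i, |d i| ≤ 1) → 0 < (1 - S * Matrix.diagonal d).det) := by
  constructor
  · intro h d hd
    exact pos_on_cube_of_concaveOn_update_of_pos_on_vertices
      (fun d i => concaveOn_det_one_sub_mul_diagonal_update S d i (convex_Icc _ _))
      (fun σ hσ => h _ ⟨σ, hσ, rfl⟩) hd
  · rintro h E ⟨σ, hσ, rfl⟩
    exact h σ fun i => by rcases hσ i with h1 | h1 <;> simp [h1]
end

section
/- Let S be a real n×n matrix such that I − S is invertible. Then the matrix (I − S)⁻¹(I + S) is a P-matrix if and only if for every ĉ ∈ ℝⁿ there exists a unique z ∈ ℝⁿ with z + S|z| = ĉ. -/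
/-
Write `M = (1 - S)⁻¹ * (1 + S)` and, for `J ⊆ {1, …, n}`, let `D_J` be the diagonal sign matrix
that is `1` on `J` and `-1` off `J`. Then `det (1 - S) * det M[J, J] = det (1 + S * D_J)`. As
`det (1 + S * diagonal d)` is affine in each `d i`, `M` is a P-matrix iff this determinant has the
sign of `det (1 - S)` on all of the cube `[-1, 1]ⁿ`, iff (the cube being connected) it does not
vanish there.

This cube condition is equivalent to injectivity of `z ↦ z + S |z|`, because the differences
`|z| - |z'|` are exactly the vectors `diagonal d *ᵥ (z - z')` with `d` in the cube. For
surjectivity, replace `|·|` coordinatewise by two-slope functions `x ↦ p x⁺ + q x⁻` with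
`|p|, |q| ≤ 1` and induct on the number of coordinates where they are not linear: making the
function at one coordinate linear along either of its branches gives two solutions, and if neither
lies on the side of its branch, both solve the system with the two branches swapped, which is
injective.
-/

def IsPMatrix {n : ℕ} (A : Matrix (Fin n) (Fin n) ℝ) : Prop :=
  ∀ J : Finset (Fin n), J.Nonempty →
    0 < (A.submatrix (fun i : J => (i : Fin n)) (fun j : J => (j : Fin n))).det

open Matrix Function

variable {ι : Type*}

theorem abs_mul_abs_add {d : ℝ} (hd : |d| ≤ 1) (y : ℝ) : |d * |y| + y| = d * y + |y| := by
  obtain ⟨hd₁, hd₂⟩ := abs_le.1 hd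
  rcases le_total 0 y with hy | hy
  · rw [abs_of_nonneg hy, abs_of_nonneg (by nlinarith)]
  · rw [abs_of_nonpos hy, abs_of_nonpos (by nlinarith)]
    ring

theorem lipschitzWith_one_posPart_negPart {p q : ℝ} (hp : |p| ≤ 1) (hq : |q| ≤ 1) :
    LipschitzWith 1 fun x : ℝ => p * x⁺ + q * x⁻ := by
  refine LipschitzWith.of_dist_le_mul fun x y => ?_
  rw [NNReal.coe_one, one_mul, Real.dist_eq, Real.dist_eq]
  -- `x⁺ - y⁺` and `x⁻ - y⁻` have opposite signs, and their difference is `x - y`.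
  have hsplit : |x⁺ - y⁺| + |x⁻ - y⁻| = |x - y| := by
    rcases le_total 0 x with hx | hx <;> rcases le_total 0 y with hy | hy <;>
      simp only [posPart_eq_self.2, posPart_eq_zero.2, negPart_eq_zero.2, negPart_eq_neg.2,
        hx, hy] <;>
      simp only [sub_zero, zero_sub, sub_self, abs_zero, add_zero, zero_add, abs_neg]
    · rw [abs_of_nonneg hx, abs_of_nonpos hy, abs_of_nonneg (by linarith)]; ring
    · rw [abs_of_nonpos hx, abs_of_nonneg hy, abs_of_nonpos (by linarith)]; ring
    · rw [neg_sub_neg, abs_sub_comm]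
  calc |p * x⁺ + q * x⁻ - (p * y⁺ + q * y⁻)| = |p * (x⁺ - y⁺) + q * (x⁻ - y⁻)| := by ring_nf
    _ ≤ |p| * |x⁺ - y⁺| + |q| * |x⁻ - y⁻| := by
      rw [← abs_mul, ← abs_mul]; exact abs_add_le _ _
    _ ≤ |x⁺ - y⁺| + |x⁻ - y⁻| := by
      gcongr <;> exact mul_le_of_le_one_left (abs_nonneg _) ‹_›
    _ = |x - y| := hsplit

-- The slope at coordinate `i` is `p i` on `[0, ∞)` and `-q i` on `(-∞, 0]`.
def kink (p q z : ι → ℝ) : ι → ℝ := fun i => p i * (z i)⁺ + q i * (z i)⁻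

theorem kink_neg_right (p z : ι → ℝ) : kink p (-p) z = p * z := by
  ext i
  simp only [kink, Pi.neg_apply, Pi.mul_apply, neg_mul, ← sub_eq_add_neg, ← mul_sub,
    posPart_sub_negPart]

theorem kink_one_one (z : ι → ℝ) : kink 1 1 z = fun i => |z i| := by
  ext i
  simp only [kink, Pi.one_apply, one_mul, posPart_add_negPart]

variable [DecidableEq ι]

theorem kink_update_left {z : ι → ℝ} {a : ι} (ha : z a ≤ 0) (p q : ι → ℝ) (r : ℝ) :
    kink (update p a r) q z = kink p q z := by
  ext i
  rcases eq_or_ne i a with rfl | hi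
  · simp [kink, posPart_eq_zero.2 ha]
  · simp [kink, hi]

theorem kink_update_right {z : ι → ℝ} {a : ι} (ha : 0 ≤ z a) (p q : ι → ℝ) (r : ℝ) :
    kink p (update q a r) z = kink p q z := by
  ext i
  rcases eq_or_ne i a with rfl | hi
  · simp [kink, negPart_eq_zero.2 ha]
  · simp [kink, hi]

variable [Fintype ι]

theorem pos_of_forall_sign_pos {f : (ι → ℝ) → ℝ}
    (hf : ∀ d a, ∃ c₀ c₁ : ℝ, ∀ t, f (update d a t) = c₀ + t * c₁)
    (hsign : ∀ d : ι → ℝ, (∀ i, d i = 1 ∨ d i = -1) → 0 < f d)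
    (d : ι → ℝ) (hd : ∀ i, |d i| ≤ 1) : 0 < f d := by
  suffices H : ∀ T : Finset ι, ∀ d : ι → ℝ, (∀ i, |d i| ≤ 1) →
      (∀ i ∉ T, d i = 1 ∨ d i = -1) → 0 < f d from
    H Finset.univ d hd fun i hi => absurd (Finset.mem_univ i) hi
  intro T
  induction T using Finset.induction_on with
  | empty => exact fun d _ hd => hsign d fun i => hd i (Finset.notMem_empty i)
  | insert a T _ IH =>
    intro d hd hsd
    obtain ⟨c₀, c₁, hc⟩ := hf d a
    have hends : ∀ s : ℝ, (s = 1 ∨ s = -1) → 0 < c₀ + s * c₁ := fun s hs => by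
      rw [← hc]
      refine IH _ ((forall_update_iff d fun _ y => |y| ≤ 1).2 ⟨by rcases hs with rfl | rfl <;> simp,
        fun i _ => hd i⟩) fun i hi => ?_
      rcases eq_or_ne i a with rfl | hia
      · simpa using hs
      · simpa [hia] using hsd i (by simp [hia, hi])
    have hplus := hends 1 (.inl rfl)
    have hminus := hends (-1) (.inr rfl)
    obtain ⟨hd₁, hd₂⟩ := abs_le.1 (hd a)
    have : 0 < c₀ + d a * c₁ := by
      rcases le_total 0 c₁ with hc₁ | hc₁ <;> nlinarith
    rwa [← hc, update_eq_self] at this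

namespace Matrix

def CubeNonsingular (S : Matrix ι ι ℝ) : Prop :=
  ∀ d : ι → ℝ, (∀ i, |d i| ≤ 1) → (1 + S * diagonal d).det ≠ 0

theorem one_add_mul_diagonal_mulVec (S : Matrix ι ι ℝ) (d y : ι → ℝ) :
    (1 + S * diagonal d) *ᵥ y = y + S *ᵥ (d * y) := by
  rw [add_mulVec, one_mulVec, ← mulVec_mulVec]
  congr 2
  ext i
  exact mulVec_diagonal d y i

theorem one_add_mul_diagonal_neg_one (S : Matrix ι ι ℝ) :
    1 + S * diagonal (fun _ => -1) = 1 - S := by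
  rw [← diagonal_neg, diagonal_one, Matrix.mul_neg, Matrix.mul_one, sub_eq_add_neg]

theorem CubeNonsingular.injective {S : Matrix ι ι ℝ} (hS : S.CubeNonsingular)
    {φ : ι → ℝ → ℝ} (hφ : ∀ i, LipschitzWith 1 (φ i)) :
    Injective fun z : ι → ℝ => z + S *ᵥ fun i => φ i (z i) := by
  intro z z' h
  set d : ι → ℝ := fun i => (φ i (z i) - φ i (z' i)) / (z i - z' i)
  have hd : ∀ i, |d i| ≤ 1 := fun i => by
    have := (hφ i).dist_le_mul (z i) (z' i)
    rw [NNReal.coe_one, one_mul, Real.dist_eq, Real.dist_eq] at this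
    rw [abs_div]
    exact div_le_one_of_le₀ this (abs_nonneg _)
  have hdiff : d * (z - z') = (fun i => φ i (z i)) - fun i => φ i (z' i) := by
    ext i
    by_cases hi : z i = z' i
    · simp [hi]
    · exact div_mul_cancel₀ _ (sub_ne_zero.2 hi)
  have hker : (1 + S * diagonal d) *ᵥ (z - z') = 0 := by
    rw [one_add_mul_diagonal_mulVec, hdiff, mulVec_sub, sub_add_sub_comm]
    exact sub_eq_zero.2 h
  exact sub_eq_zero.1 (eq_zero_of_mulVec_eq_zero (hS d hd) hker)

theorem cubeNonsingular_of_injective {S : Matrix ι ι ℝ}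
    (h : Injective fun z : ι → ℝ => z + S *ᵥ fun i => |z i|) : S.CubeNonsingular := by
  intro d hd hdet
  obtain ⟨y, hy, hker⟩ := exists_mulVec_eq_zero_iff.2 hdet
  -- `z - z' = 2 • y` and `|z| - |z'| = 2 • (d * y)`, so `z` and `z'` have the same image.
  set z : ι → ℝ := fun i => d i * |y i| + y i
  set z' : ι → ℝ := fun i => d i * |-y i| + -y i
  have hz : z - z' = 2 • y := by ext i; simp [z, z']; ring
  have habs : (fun i => |z i|) - (fun i => |z' i|) = 2 • (d * y) := by
    ext i
    simp only [z, z', Pi.sub_apply, Pi.smul_apply, Pi.mul_apply]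
    rw [abs_mul_abs_add (hd i), abs_mul_abs_add (hd i), abs_neg]
    ring
  have himage : (z + S *ᵥ fun i => |z i|) - (z' + S *ᵥ fun i => |z' i|) = 0 := by
    rw [add_sub_add_comm, ← mulVec_sub, hz, habs, mulVec_smul, ← smul_add,
      ← one_add_mul_diagonal_mulVec, hker, smul_zero]
  have := sub_eq_zero.2 (h (sub_eq_zero.1 himage))
  rw [hz, smul_eq_zero] at this
  exact hy (this.resolve_left two_ne_zero)

theorem CubeNonsingular.injective_kink {S : Matrix ι ι ℝ} (hS : S.CubeNonsingular)
    {p q : ι → ℝ} (hp : ∀ i, |p i| ≤ 1) (hq : ∀ i, |q i| ≤ 1) :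
    Injective fun z => z + S *ᵥ kink p q z :=
  hS.injective fun i => lipschitzWith_one_posPart_negPart (hp i) (hq i)

theorem CubeNonsingular.exists_add_mulVec_kink_eq {S : Matrix ι ι ℝ} (hS : S.CubeNonsingular)
    {p q : ι → ℝ} (hp : ∀ i, |p i| ≤ 1) (hq : ∀ i, |q i| ≤ 1) (c : ι → ℝ) :
    ∃ z, z + S *ᵥ kink p q z = c := by
  -- Induction on the set of coordinates where the slopes `p i`, `-q i` of the two branches differ.
  suffices H : ∀ K : Finset ι, ∀ p q : ι → ℝ, (∀ i, |p i| ≤ 1) → (∀ i, |q i| ≤ 1) →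
      (∀ i ∉ K, q i = -p i) → ∃ z, z + S *ᵥ kink p q z = c from
    H Finset.univ p q hp hq fun i hi => absurd (Finset.mem_univ i) hi
  intro K
  induction K using Finset.induction_on with
  | empty =>
    intro p q hp _ hpq
    obtain rfl : q = -p := funext fun i => hpq i (Finset.notMem_empty i)
    obtain ⟨z, hz⟩ := mulVec_surjective_iff_isUnit.2
      ((isUnit_iff_isUnit_det _).2 (hS p hp).isUnit) c
    exact ⟨z, by rw [kink_neg_right, ← one_add_mul_diagonal_mulVec, hz]⟩
  | insert a K _ IH =>
    intro p q hp hq hpq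
    have hbound : ∀ (r : ι → ℝ) (x : ℝ), (∀ i, |r i| ≤ 1) → |x| ≤ 1 → ∀ i, |update r a x i| ≤ 1 :=
      fun r x hr hx => (forall_update_iff r fun _ y => |y| ≤ 1).2 ⟨hx, fun i _ => hr i⟩
    have hp' := hbound p _ hp (abs_neg (q a) ▸ hq a)
    have hq' := hbound q _ hq (abs_neg (p a) ▸ hp a)
    obtain ⟨z₁, hz₁⟩ := IH p (update q a (-p a)) hp hq' fun i hi => by
      rcases eq_or_ne i a with rfl | hia
      · simp
      · simpa [hia] using hpq i (by simp [hia, hi])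
    obtain ⟨z₂, hz₂⟩ := IH (update p a (-q a)) q hp' hq fun i hi => by
      rcases eq_or_ne i a with rfl | hia
      · simp
      · simpa [hia] using hpq i (by simp [hia, hi])
    by_cases h₁ : 0 ≤ z₁ a
    · exact ⟨z₁, by rwa [← kink_update_right h₁ p q (-p a)]⟩
    by_cases h₂ : z₂ a ≤ 0
    · exact ⟨z₂, by rwa [← kink_update_left h₂ p q (-q a)]⟩
    -- Otherwise `z₁` and `z₂` both solve the system with the two branches at `a` swapped.
    rw [not_le] at h₁ h₂
    have hswap := hS.injective_kink hp' hq' (a₁ := z₁) (a₂ := z₂) <| by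
      simp only
      rw [kink_update_left h₁.le, kink_update_right h₂.le, hz₁, hz₂]
    exact absurd (hswap ▸ h₁) (not_lt.2 h₂.le)

theorem CubeNonsingular.bijective {S : Matrix ι ι ℝ} (hS : S.CubeNonsingular) :
    Bijective fun z : ι → ℝ => z + S *ᵥ fun i => |z i| := by
  simp only [← kink_one_one]
  have h1 : ∀ i, |(1 : ι → ℝ) i| ≤ 1 := fun _ => by simp
  exact ⟨hS.injective_kink h1 h1, hS.exists_add_mulVec_kink_eq h1 h1⟩

theorem cubeNonsingular_iff_bijective {S : Matrix ι ι ℝ} :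
    S.CubeNonsingular ↔ Bijective fun z : ι → ℝ => z + S *ᵥ fun i => |z i| :=
  ⟨CubeNonsingular.bijective, fun h => cubeNonsingular_of_injective h.injective⟩

theorem det_mul_diagonal_indicator_add_one_sub (A : Matrix ι ι ℝ) (J : Finset ι) :
    let P : Matrix ι ι ℝ := diagonal fun j => if j ∈ J then 1 else 0
    (A * P + (1 - P)).det = (A.submatrix (fun i : J => (i : ι)) (fun j : J => (j : ι))).det := by
  intro P
  rw [← det_submatrix_equiv_self (Equiv.sumCompl (· ∈ J))]
  have hblock : (A * P + (1 - P)).submatrix (Equiv.sumCompl (· ∈ J)) (Equiv.sumCompl (· ∈ J)) =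
      fromBlocks (A.submatrix (fun i : J => (i : ι)) (fun j : J => (j : ι))) 0
        (of fun (i : {a // a ∉ J}) (j : J) => A i j) 1 := by
    ext (i | i) (j | j)
    · by_cases h : (i : ι) = j <;> simp [P, h, j.2]
    · simp [P, j.2, ne_of_mem_of_not_mem i.2 j.2]
    · simp [P, j.2, (ne_of_mem_of_not_mem j.2 i.2).symm]
    · by_cases h : (i : ι) = j <;> simp [P, one_apply, Subtype.ext_iff, h, j.2]
  rw [hblock, det_fromBlocks_zero₁₂, det_one, mul_one]

theorem det_one_sub_mul_det_cayley_submatrix (S : Matrix ι ι ℝ) (hS : IsUnit (1 - S))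
    (J : Finset ι) :
    (1 - S).det *
        (((1 - S)⁻¹ * (1 + S)).submatrix (fun i : J => (i : ι)) (fun j : J => (j : ι))).det =
      (1 + S * diagonal fun j => if j ∈ J then 1 else -1).det := by
  set P : Matrix ι ι ℝ := diagonal fun j => if j ∈ J then 1 else 0
  have hsign : (diagonal fun j => if j ∈ J then (1 : ℝ) else -1) = P + P - 1 := by
    ext i j
    by_cases h : i = j <;> by_cases hj : j ∈ J <;> simp [P, h, hj]
  have hcayley : (1 - S) * ((1 - S)⁻¹ * (1 + S)) = 1 + S := by
    rw [← Matrix.mul_assoc, mul_nonsing_inv _ ((isUnit_iff_isUnit_det _).1 hS), Matrix.one_mul]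
  rw [← det_mul_diagonal_indicator_add_one_sub, ← det_mul, mul_add, ← Matrix.mul_assoc, hcayley,
    hsign]
  congr 1
  noncomm_ring

theorem exists_det_one_add_mul_diagonal_update_eq (S : Matrix ι ι ℝ) (d : ι → ℝ) (a : ι) :
    ∃ c₀ c₁ : ℝ, ∀ t, (1 + S * diagonal (update d a t)).det = c₀ + t * c₁ := by
  set B := 1 + S * diagonal d
  refine ⟨(B.updateCol a fun i => (1 : Matrix ι ι ℝ) i a).det, (B.updateCol a fun i => S i a).det,
    fun t => ?_⟩
  have hcol : 1 + S * diagonal (update d a t) =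
      B.updateCol a ((fun i => (1 : Matrix ι ι ℝ) i a) + t • fun i => S i a) := by
    ext i j
    rcases eq_or_ne j a with rfl | hj
    · simp [mul_comm]
    · simp [B, hj]
  rw [hcol, det_updateCol_add, det_updateCol_smul]

theorem CubeNonsingular.det_mul_det_pos {S : Matrix ι ι ℝ} (hS : S.CubeNonsingular)
    (d : ι → ℝ) (hd : ∀ i, |d i| ≤ 1) : 0 < (1 + S * diagonal d).det * (1 - S).det := by
  set cube : Set (ι → ℝ) := {d | ∀ i, |d i| ≤ 1}
  have hcube : IsPreconnected cube := by
    have : cube = Set.univ.pi fun _ => Set.Icc (-1) 1 := by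
      ext
      simp only [cube, Set.mem_ofPred_eq, Set.mem_univ_pi, Set.mem_Icc, abs_le]
    exact this ▸ isPreconnected_univ_pi fun _ => isPreconnected_Icc
  have hneg : (fun _ => -1) ∈ cube := fun _ => by simp
  have hdet : (1 - S).det ≠ 0 := one_add_mul_diagonal_neg_one S ▸ hS _ hneg
  have hcont : Continuous fun d : ι → ℝ => (1 + S * diagonal d).det * (1 - S).det := by
    fun_prop
  by_contra! hle
  obtain ⟨d', hd', hzero⟩ := hcube.intermediate_value hd hneg hcont.continuousOn
    ⟨hle, by simpa only [one_add_mul_diagonal_neg_one] using (mul_self_pos.2 hdet).le⟩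
  exact mul_ne_zero (hS d' hd') hdet hzero

end Matrix

theorem isPMatrix_cayley_iff {n : ℕ} {S : Matrix (Fin n) (Fin n) ℝ} (hS : IsUnit (1 - S)) :
    IsPMatrix ((1 - S)⁻¹ * (1 + S)) ↔ S.CubeNonsingular := by
  set minor : Finset (Fin n) → ℝ := fun J =>
    (((1 - S)⁻¹ * (1 + S)).submatrix (fun i : J => (i : Fin n)) (fun j : J => (j : Fin n))).det
  have hdet : 0 < (1 - S).det ^ 2 := sq_pos_of_ne_zero ((isUnit_iff_isUnit_det _).1 hS).ne_zero
  have hcorner (J : Finset (Fin n)) :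
      (1 + S * diagonal fun j => if j ∈ J then 1 else -1).det * (1 - S).det =
        minor J * (1 - S).det ^ 2 := by
    rw [← det_one_sub_mul_det_cayley_submatrix S hS J]
    ring
  constructor
  · intro hP d hd
    have hminor (J : Finset (Fin n)) : 0 < minor J := by
      rcases J.eq_empty_or_nonempty with rfl | hJ
      · have : IsEmpty (∅ : Finset (Fin n)) := Finset.isEmpty_coe_sort.2 rfl
        simp only [minor, det_isEmpty, zero_lt_one]
      · exact hP J hJ
    refine left_ne_zero_of_mul (pos_of_forall_sign_pos
      (f := fun d => (1 + S * diagonal d).det * (1 - S).det) ?_ ?_ d hd).ne'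
    · intro d a
      obtain ⟨c₀, c₁, hc⟩ := exists_det_one_add_mul_diagonal_update_eq S d a
      exact ⟨c₀ * (1 - S).det, c₁ * (1 - S).det, fun t => by rw [hc]; ring⟩
    · intro s hs
      have : s = fun j => if j ∈ Finset.univ.filter (s · = 1) then 1 else -1 := by
        ext j
        rcases hs j with h | h <;> simp [h]
      rw [this, hcorner]
      exact mul_pos (hminor _) hdet
  · intro hS' J _
    have := hS'.det_mul_det_pos (fun j => if j ∈ J then 1 else -1) fun i => by split_ifs <;> simp
    rw [hcorner] at this
    exact (mul_pos_iff_of_pos_right hdet).1 this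

theorem stmt_6 {n : ℕ} (S : Matrix (Fin n) (Fin n) ℝ) (hinv : IsUnit (1 - S)) :
    IsPMatrix ((1 - S)⁻¹ * (1 + S)) ↔
      (∀ c : Fin n → ℝ, ∃! z : Fin n → ℝ, z + S.mulVec (fun i => |z i|) = c) := by
  rw [isPMatrix_cayley_iff hinv, cubeNonsingular_iff_bijective, bijective_iff_existsUnique]
end

section
/- Let S be a real n×n matrix such that every real eigenvalue λ of Σ'S, for every signature matrix Σ', satisfies |λ| < 1 (i.e., ρ₀ˢ(S) < 1). Let z, ĉ ∈ ℝⁿ and a signature matrix Σ satisfy Σz = |z| and (I − SΣ)z = ĉ, and assume that I − SΣ is invertible with A := (I − SΣ)⁻¹ strictly diagonally dominant with a positive diagonal. Then for every index i such that |ĉ_i| = max_k |ĉ_k|, it holds that sign(z_i) = sign(ĉ_i). -/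
namespace Real

theorem sign_eq_of_abs_sub_lt_abs {x y : ℝ} (h : |x - y| < |y|) : sign x = sign y := by
  rcases lt_trichotomy y 0 with hy | rfl | hy
  · rw [abs_of_neg hy] at h
    rw [sign_of_neg hy, sign_of_neg (by linarith [(abs_lt.mp h).2])]
  · rw [abs_zero] at h
    exact absurd h (abs_nonneg _).not_gt
  · rw [abs_of_pos hy] at h
    rw [sign_of_pos hy, sign_of_pos (by linarith [(abs_lt.mp h).1])]

theorem sign_mul_of_pos {a r : ℝ} (ha : 0 < a) : sign (a * r) = sign r := by
  rcases lt_trichotomy r 0 with hr | rfl | hr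
  · rw [sign_of_neg (mul_neg_of_pos_of_neg ha hr), sign_of_neg hr]
  · simp
  · rw [sign_of_pos (mul_pos ha hr), sign_of_pos hr]

end Real

theorem Finset.abs_sum_mul_le_sum_abs_mul {ι : Type*} (s : Finset ι) (a c : ι → ℝ) {M : ℝ}
    (hc : ∀ j, |c j| ≤ M) : |∑ j ∈ s, a j * c j| ≤ (∑ j ∈ s, |a j|) * M :=
  calc |∑ j ∈ s, a j * c j|
      ≤ ∑ j ∈ s, |a j| * |c j| := (abs_sum_le_sum_abs _ s).trans_eq (by simp only [abs_mul])
    _ ≤ ∑ j ∈ s, |a j| * M := sum_le_sum fun j _ => by gcongr; exact hc j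
    _ = (∑ j ∈ s, |a j|) * M := (sum_mul s _ M).symm

theorem Matrix.sign_mulVec_apply_of_row_diag_dominant {ι : Type*} [Fintype ι] [DecidableEq ι]
    (A : Matrix ι ι ℝ) (c : ι → ℝ) {i : ι}
    (hA : ∑ j ∈ Finset.univ.erase i, |A i j| < A i i) (hi : ∀ k, |c k| ≤ |c i|) :
    Real.sign (A.mulVec c i) = Real.sign (c i) := by
  by_cases hci : c i = 0
  · have hc : c = 0 := funext fun k => abs_nonpos_iff.mp (by simpa [hci] using hi k)
    simp [hc]
  have hAii : 0 < A i i := (Finset.sum_nonneg fun j _ => abs_nonneg _).trans_lt hA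
  have hoff : A.mulVec c i - A i i * c i = ∑ j ∈ Finset.univ.erase i, A i j * c j := by
    rw [mulVec, dotProduct, ← Finset.add_sum_erase _ _ (Finset.mem_univ i), add_sub_cancel_left]
  rw [← Real.sign_mul_of_pos hAii (r := c i)]
  apply Real.sign_eq_of_abs_sub_lt_abs
  calc |A.mulVec c i - A i i * c i|
      ≤ (∑ j ∈ Finset.univ.erase i, |A i j|) * |c i| := by
        rw [hoff]; exact Finset.abs_sum_mul_le_sum_abs_mul _ _ _ hi
    _ < A i i * |c i| := mul_lt_mul_of_pos_right hA (abs_pos.mpr hci)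
    _ = |A i i * c i| := by rw [abs_mul, abs_of_pos hAii]

theorem stmt_8_general {n : ℕ} (S E : Matrix (Fin n) (Fin n) ℝ) (z c : Fin n → ℝ)
    (hc : (1 - S * E).mulVec z = c)
    (hinv : IsUnit (1 - S * E))
    (hA : ∀ i, ∑ j ∈ Finset.univ.erase i, |(1 - S * E)⁻¹ i j| < (1 - S * E)⁻¹ i i) :
    ∀ i, (∀ k, |c k| ≤ |c i|) → Real.sign (z i) = Real.sign (c i) := by
  have hz : z = (1 - S * E)⁻¹.mulVec c := by
    rw [← hc, Matrix.mulVec_mulVec,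
      Matrix.nonsing_inv_mul _ ((Matrix.isUnit_iff_isUnit_det _).mp hinv), Matrix.one_mulVec]
  intro i hi
  rw [hz]
  exact Matrix.sign_mulVec_apply_of_row_diag_dominant _ c (hA i) hi

theorem stmt_8 {n : ℕ} (S E : Matrix (Fin n) (Fin n) ℝ) (z c : Fin n → ℝ)
    (hrho : ∀ E', IsSignature E' → ∀ lam : ℝ, IsRealEigenvalue (E' * S) lam → |lam| < 1)
    (hE : IsSignature E)
    (hz : E.mulVec z = fun i => |z i|)
    (hc : (1 - S * E).mulVec z = c)
    (hinv : IsUnit (1 - S * E))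
    (hA : ∀ i, ∑ j ∈ Finset.univ.erase i, |(1 - S * E)⁻¹ i j| < (1 - S * E)⁻¹ i i) :
    ∀ i, (∀ k, |c k| ≤ |c i|) → Real.sign (z i) = Real.sign (c i) :=
  stmt_8_general S E z c hc hinv hA
end

section
/- Let S be an irreducible real n×n matrix with ‖S‖∞ ≤ 1/2. Then I − S is invertible and its inverse A⁻¹ := (I − S)⁻¹ is strictly diagonally dominant with a positive diagonal, i.e., (A⁻¹)_ii > ∑_{j≠i} |(A⁻¹)_ij| for every row i. -/
/-!
Let `B = (1 - S)⁻¹`, fix a row `i`, and let `ε` be the sign pattern with `ε i = 1` and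
`ε j = -sign (B i j)` for `j ≠ i`. Then `x = B *ᵥ ε` solves `x = ε + S *ᵥ x` and
`x i = B i i - ∑_{j ≠ i} |B i j|`, so it suffices to show `x i > 0`.
Since `‖S‖∞ ≤ 1/2`, `‖x‖∞ ≤ 2 ‖ε‖∞ ≤ 2` (which for `ε = 0` also gives invertibility), hence
`x i = 1 + (S *ᵥ x) i ≥ 0`. If `x i = 0`, then `(S *ᵥ x) i = -1`, which with `∑ⱼ |S i j| ≤ 1/2`
and `|x| ≤ 2` forces `|x m| = 2` wherever `S i m ≠ 0`. The same saturation propagates along the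
nonzero entries of `S` from the set `J = {m | |x m| = 2}`, which contains a neighbour of `i` but
not `i`; this contradicts irreducibility.
-/

open Matrix Finset

lemma Finset.eq_of_sum_mul_le_sum_mul {ι : Type*} [Fintype ι] {w y : ι → ℝ} {M : ℝ}
    (hw : ∀ m, 0 ≤ w m) (hy : ∀ m, y m ≤ M) (hsum : ∑ m, w m * M ≤ ∑ m, w m * y m)
    {m : ι} (hm : w m ≠ 0) : y m = M := by
  by_contra hne
  have hlt : w m * y m < w m * M :=
    mul_lt_mul_of_pos_left ((hy m).lt_of_ne hne) ((hw m).lt_of_ne' hm)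
  have : ∑ m, w m * y m < ∑ m, w m * M :=
    Finset.sum_lt_sum (fun k _ => mul_le_mul_of_nonneg_left (hy k) (hw k)) ⟨m, mem_univ m, hlt⟩
  linarith

section RowSumHalf

variable {ι : Type*} [Fintype ι] (S : Matrix ι ι ℝ)

lemma abs_mulVec_apply_le (x : ι → ℝ) (l : ι) :
    |(S *ᵥ x) l| ≤ ∑ m, |S l m| * |x m| := by
  simpa only [mulVec, dotProduct, abs_mul] using Finset.abs_sum_le_sum_abs (fun m => S l m * x m) univ

variable {S}

lemma norm_mulVec_le_half (hS : ∀ i, ∑ j, |S i j| ≤ 1 / 2) (x : ι → ℝ) :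
    ‖S *ᵥ x‖ ≤ ‖x‖ / 2 := by
  refine (pi_norm_le_iff_of_nonneg (by positivity)).mpr fun l => ?_
  calc ‖(S *ᵥ x) l‖ ≤ ∑ m, |S l m| * |x m| := abs_mulVec_apply_le S x l
    _ ≤ ∑ m, |S l m| * ‖x‖ :=
        sum_le_sum fun m _ => mul_le_mul_of_nonneg_left (norm_le_pi_norm x m) (abs_nonneg _)
    _ = (∑ m, |S l m|) * ‖x‖ := (sum_mul ..).symm
    _ ≤ ‖x‖ / 2 := by nlinarith [hS l, norm_nonneg x]

lemma norm_le_two_mul_of_eq_add_mulVec (hS : ∀ i, ∑ j, |S i j| ≤ 1 / 2) {x ε : ι → ℝ}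
    (hx : x = ε + S *ᵥ x) : ‖x‖ ≤ 2 * ‖ε‖ := by
  have : ‖x‖ ≤ ‖ε‖ + ‖x‖ / 2 :=
    calc ‖x‖ = ‖ε + S *ᵥ x‖ := by rw [← hx]
      _ ≤ ‖ε‖ + ‖S *ᵥ x‖ := norm_add_le _ _
      _ ≤ ‖ε‖ + ‖x‖ / 2 := by gcongr; exact norm_mulVec_le_half hS x
  linarith

lemma isUnit_one_sub_of_sum_abs_le_half [DecidableEq ι] (hS : ∀ i, ∑ j, |S i j| ≤ 1 / 2) :
    IsUnit (1 - S) := by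
  rw [← mulVec_injective_iff_isUnit]
  intro x y hxy
  have hz : (1 - S) *ᵥ (x - y) = 0 := by rw [mulVec_sub, hxy, sub_self]
  rw [sub_mulVec, one_mulVec, sub_eq_zero] at hz
  have := norm_le_two_mul_of_eq_add_mulVec hS (ε := 0) (by rw [zero_add]; exact hz)
  exact sub_eq_zero.mp (norm_le_zero_iff.mp (by simpa using this))

lemma abs_eq_two_of_one_le_sum (hS : ∀ i, ∑ j, |S i j| ≤ 1 / 2) {x : ι → ℝ}
    (hx : ∀ m, |x m| ≤ 2) {l : ι} (hl : 1 ≤ ∑ m, |S l m| * |x m|) {m : ι} (hm : S l m ≠ 0) :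
    |x m| = 2 := by
  refine Finset.eq_of_sum_mul_le_sum_mul (fun _ => abs_nonneg _) hx ?_ (abs_ne_zero.mpr hm)
  rw [← sum_mul]
  linarith [hS l]

lemma pos_of_eq_add_mulVec
    (hirr : ∀ J : Finset ι, J.Nonempty → J ≠ univ → ∃ i ∈ J, ∃ j ∉ J, S i j ≠ 0)
    (hS : ∀ i, ∑ j, |S i j| ≤ 1 / 2) {x ε : ι → ℝ} (hx : x = ε + S *ᵥ x)
    (hε : ‖ε‖ ≤ 1) {i : ι} (hi : ε i = 1) : 0 < x i := by
  have hxnorm : ‖x‖ ≤ 2 := by linarith [norm_le_two_mul_of_eq_add_mulVec hS hx]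
  have hx2 : ∀ m, |x m| ≤ 2 := fun m => (norm_le_pi_norm x m).trans hxnorm
  have hxl : ∀ l, x l = ε l + (S *ᵥ x) l := fun l => congrFun hx l
  have hSx : ∀ l, |(S *ᵥ x) l| ≤ 1 := fun l =>
    ((norm_le_pi_norm _ l).trans (norm_mulVec_le_half hS x)).trans (by linarith)
  set J := univ.filter fun m => |x m| = 2
  have hJclosed : ∀ l ∈ J, ∀ m, S l m ≠ 0 → m ∈ J := by
    intro l hl m hm
    have hxl2 : |x l| = 2 := (mem_filter.mp hl).2
    have : |x l| ≤ |ε l| + |(S *ᵥ x) l| := hxl l ▸ abs_add_le _ _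
    have : 1 ≤ ∑ m, |S l m| * |x m| := by
      have : |ε l| ≤ 1 := (norm_le_pi_norm ε l).trans hε
      linarith [abs_mulVec_apply_le S x l]
    exact mem_filter.mpr ⟨mem_univ m, abs_eq_two_of_one_le_sum hS hx2 this hm⟩
  by_contra! hxi
  have hxi0 : x i = 0 := by linarith [hxl i, abs_le.mp (hSx i)]
  have hrow : 1 ≤ ∑ m, |S i m| * |x m| := by
    have : (S *ᵥ x) i = -1 := by linarith [hxl i]
    simpa [this] using abs_mulVec_apply_le S x i
  obtain ⟨m, -, hm⟩ := exists_ne_zero_of_sum_ne_zero (by linarith : ∑ m, |S i m| * |x m| ≠ 0)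
  have hSim : S i m ≠ 0 := fun h => hm (by simp [h])
  have hmJ : m ∈ J := mem_filter.mpr ⟨mem_univ m, abs_eq_two_of_one_le_sum hS hx2 hrow hSim⟩
  have hiJ : i ∉ J := by simp [J, hxi0]
  obtain ⟨l, hl, k, hk, hlk⟩ := hirr J ⟨m, hmJ⟩ (ne_of_mem_of_not_mem' (mem_univ i) hiJ).symm
  exact hk (hJclosed l hl k hlk)

end RowSumHalf

section SignTest

variable {ι : Type*} [Fintype ι] [DecidableEq ι]

lemma norm_update_neg_sign_le_one (b : ι → ℝ) (i : ι) :
    ‖Function.update (fun j => -(SignType.sign (b j) : ℝ)) i 1‖ ≤ 1 := by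
  refine (pi_norm_le_iff_of_nonneg zero_le_one).mpr fun j => ?_
  rcases eq_or_ne j i with rfl | hj
  · simp
  · rw [Function.update_of_ne hj, norm_neg]
    rcases lt_trichotomy (b j) 0 with h | h | h <;> simp [h]

lemma dotProduct_update_neg_sign (b : ι → ℝ) (i : ι) :
    b ⬝ᵥ Function.update (fun j => -(SignType.sign (b j) : ℝ)) i 1 =
      b i - ∑ j ∈ univ.erase i, |b j| := by
  rw [dotProduct, ← add_sum_erase _ _ (mem_univ i), Function.update_self, mul_one,
    sub_eq_add_neg, ← sum_neg_distrib]
  refine congrArg _ (sum_congr rfl fun j hj => ?_)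
  rw [Function.update_of_ne (ne_of_mem_erase hj), mul_neg, self_mul_sign]

end SignTest

theorem stmt_9 {n : ℕ} (S : Matrix (Fin n) (Fin n) ℝ)
    (hirr : ∀ J : Finset (Fin n), J.Nonempty → J ≠ Finset.univ →
      ∃ i ∈ J, ∃ j ∉ J, S i j ≠ 0)
    (hS : ∀ i, ∑ j, |S i j| ≤ 1 / 2) :
    IsUnit (1 - S) ∧
      ∀ i, ∑ j ∈ Finset.univ.erase i, |(1 - S)⁻¹ i j| < (1 - S)⁻¹ i i := by
  have hunit := isUnit_one_sub_of_sum_abs_le_half hS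
  refine ⟨hunit, fun i => ?_⟩
  set B := (1 - S)⁻¹
  set ε := Function.update (fun j => -(SignType.sign (B i j) : ℝ)) i 1
  have hfix : B *ᵥ ε = ε + S *ᵥ (B *ᵥ ε) := by
    have : (1 - S) *ᵥ (B *ᵥ ε) = ε := by
      rw [mulVec_mulVec, mul_nonsing_inv _ ((isUnit_iff_isUnit_det _).mp hunit), one_mulVec]
    rw [sub_mulVec, one_mulVec, sub_eq_iff_eq_add] at this
    exact this
  have hpos := pos_of_eq_add_mulVec hirr hS hfix (norm_update_neg_sign_le_one (B i) i)
    (Function.update_self ..)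
  rw [mulVec, dotProduct_update_neg_sign] at hpos
  linarith
end

section
/- Let S be a real n×n matrix with ‖S‖∞ < 1/2. Then I − S is invertible and its inverse A⁻¹ := (I − S)⁻¹ is strictly diagonally dominant with a positive diagonal, i.e., (A⁻¹)_ii > ∑_{j≠i} |(A⁻¹)_ij| for every row i. -/
/-!
In the row-sum norm, `B = (1 - S)⁻¹` satisfies `B - 1 = S + S (B - 1)`, so
`‖B - 1‖ ≤ ‖S‖ / (1 - ‖S‖) < 1` when `‖S‖ < 1/2`. Read off row `i`, this says
`|B i i - 1| + ∑_{j ≠ i} |B i j| < 1`, which forces `∑_{j ≠ i} |B i j| < B i i`.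
-/

open Finset

attribute [local instance] Matrix.linftyOpSeminormedAddCommGroup Matrix.linftyOpNormedRing
  Matrix.linftyOpNormedAlgebra

theorem norm_sub_one_lt_one_of_one_sub_mul_eq_one {R : Type*} [SeminormedRing R] {s b : R}
    (h : (1 - s) * b = 1) (hs : ‖s‖ < 1 / 2) : ‖b - 1‖ < 1 := by
  have hb : b - 1 = s + s * (b - 1) := by
    rw [sub_mul, one_mul] at h
    rw [mul_sub, mul_one, ← h]
    abel
  have : ‖b - 1‖ ≤ ‖s‖ + ‖s‖ * ‖b - 1‖ :=
    calc ‖b - 1‖ = ‖s + s * (b - 1)‖ := by rw [← hb]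
      _ ≤ ‖s‖ + ‖s * (b - 1)‖ := norm_add_le _ _
      _ ≤ ‖s‖ + ‖s‖ * ‖b - 1‖ := by gcongr; exact norm_mul_le _ _
  nlinarith [norm_nonneg (b - 1)]

namespace Matrix

variable {m n α : Type*} [Fintype m] [Fintype n] [SeminormedAddCommGroup α]

theorem sum_norm_row_le_linfty_opNorm (A : Matrix m n α) (i : m) : ∑ j, ‖A i j‖ ≤ ‖A‖ := by
  rw [linfty_opNorm_def]
  simpa only [← coe_nnnorm, ← NNReal.coe_sum, NNReal.coe_le_coe] using
    Finset.le_sup (f := fun i => ∑ j, ‖A i j‖₊) (mem_univ i)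

theorem linfty_opNorm_lt_of_sum_norm_row_lt {A : Matrix m n α} {r : ℝ} (hr : 0 < r)
    (h : ∀ i, ∑ j, ‖A i j‖ < r) : ‖A‖ < r := by
  lift r to NNReal using hr.le
  rw [linfty_opNorm_def, NNReal.coe_lt_coe, Finset.sup_lt_iff (by exact_mod_cast hr)]
  simpa only [← coe_nnnorm, ← NNReal.coe_sum, NNReal.coe_lt_coe] using fun i _ => h i

theorem sum_abs_erase_lt_diag_of_linfty_opNorm_sub_one_lt_one [DecidableEq m]
    {M : Matrix m m ℝ} (hM : ‖M - 1‖ < 1) (i : m) :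
    ∑ j ∈ univ.erase i, |M i j| < M i i := by
  have hrow := (sum_norm_row_le_linfty_opNorm (M - 1) i).trans_lt hM
  rw [← add_sum_erase _ _ (mem_univ i)] at hrow
  have hoff : ∑ j ∈ univ.erase i, ‖(M - 1) i j‖ = ∑ j ∈ univ.erase i, |M i j| :=
    sum_congr rfl fun j hj => by
      rw [sub_apply, one_apply_ne (ne_of_mem_erase hj).symm, sub_zero, Real.norm_eq_abs]
  rw [hoff, sub_apply, one_apply_eq, Real.norm_eq_abs] at hrow
  linarith [neg_abs_le (M i i - 1)]

end Matrix

theorem stmt_10 {n : ℕ} (S : Matrix (Fin n) (Fin n) ℝ)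
    (hS : ∀ i, ∑ j, |S i j| < 1 / 2) :
    IsUnit (1 - S) ∧
      ∀ i, ∑ j ∈ Finset.univ.erase i, |(1 - S)⁻¹ i j| < (1 - S)⁻¹ i i := by
  have hS' : ‖S‖ < 1 / 2 :=
    Matrix.linfty_opNorm_lt_of_sum_norm_row_lt (A := S) (by norm_num)
      (by simpa only [Real.norm_eq_abs])
  have hU : IsUnit (1 - S) := isUnit_one_sub_of_norm_lt_one (hS'.trans (by norm_num))
  have hinv : (1 - S) * (1 - S)⁻¹ = 1 :=
    Matrix.mul_nonsing_inv _ ((Matrix.isUnit_iff_isUnit_det _).mp hU)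
  exact ⟨hU, Matrix.sum_abs_erase_lt_diag_of_linfty_opNorm_sub_one_lt_one
    (norm_sub_one_lt_one_of_one_sub_mul_eq_one hinv hS')⟩
end

section
/- Let S be an irreducible real n×n matrix with ‖S‖∞ ≤ 1/2, and let z, ĉ ∈ ℝⁿ satisfy z − S|z| = ĉ. Then for every index i with |ĉ_i| = max_k |ĉ_k|, it holds that sign(z_i) = sign(ĉ_i). -/
/-!
Write `z = c + w` with `w = S |z|` and let `M = max |z|`. The row bound gives `|w| ≤ M / 2`, and
evaluating at an index where `|z|` is maximal gives `M ≤ 2 max |c|`. At an index `i` where `|c|`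
is maximal this yields `|z i - c i| = |w i| ≤ |c i|`, so `z i` lies between `0` and `2 c i`.
It remains to exclude `z i = 0` when `c i ≠ 0`: then all the previous inequalities are tight, and
tightness at a maximiser of `|z|` forces `|z j| = M` along every nonzero entry `S k j`; by
irreducibility `|z| ≡ M = 2 |c i| > 0`, contradicting `z i = 0`.
-/

open Finset Matrix

theorem Real.sign_eq_sign_of_abs_sub_le {x y : ℝ} (hxy : |x - y| ≤ |y|) (hx : y ≠ 0 → x ≠ 0) :
    Real.sign x = Real.sign y := by
  rcases lt_trichotomy y 0 with hy | rfl | hy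
  · have hx' : x < 0 := lt_of_le_of_ne (by cases abs_le.mp (abs_of_neg hy ▸ hxy); linarith)
      (hx hy.ne)
    rw [Real.sign_of_neg hx', Real.sign_of_neg hy]
  · rw [abs_zero, abs_nonpos_iff, sub_zero] at hxy
    rw [hxy]
  · have hx' : 0 < x := lt_of_le_of_ne (by cases abs_le.mp (abs_of_pos hy ▸ hxy); linarith)
      (hx hy.ne').symm
    rw [Real.sign_of_pos hx', Real.sign_of_pos hy]

theorem Matrix.forall_of_irreducible {ι R : Type*} [Fintype ι] [Zero R] (S : Matrix ι ι R)
    (hirr : ∀ J : Finset ι, J.Nonempty → J ≠ univ → ∃ i ∈ J, ∃ j ∉ J, S i j ≠ 0)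
    {P : ι → Prop} (hP : ∃ i, P i) (hclosed : ∀ k j, P k → S k j ≠ 0 → P j) : ∀ j, P j := by
  classical
  obtain ⟨i, hi⟩ := hP
  by_contra hnot
  obtain ⟨k, hk, j, hj, hS⟩ := hirr (univ.filter P) ⟨i, by simpa using hi⟩
    (fun hJ => hnot fun j => (mem_filter.mp (by rw [hJ]; exact mem_univ j)).2)
  simp only [mem_filter, mem_univ, true_and] at hk hj
  exact hj (hclosed k j hk hS)

section RowBound

variable {ι R : Type*} [Fintype ι] [CommRing R] [LinearOrder R] [IsStrictOrderedRing R]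
  {S : Matrix ι ι R} {v : ι → R} {k : ι} {r M : R}

theorem Matrix.abs_mulVec_apply_le_sum (S : Matrix ι ι R) (v : ι → R) (k : ι) :
    |(S *ᵥ v) k| ≤ ∑ j, |S k j| * |v j| := by
  simpa only [mulVec, dotProduct, abs_mul] using abs_sum_le_sum_abs (fun j => S k j * v j) univ

theorem Matrix.abs_mulVec_apply_le_s12 (hk : ∑ j, |S k j| ≤ r) (hv : ∀ j, |v j| ≤ M) (hM : 0 ≤ M) :
    |(S *ᵥ v) k| ≤ r * M :=
  calc |(S *ᵥ v) k| ≤ ∑ j, |S k j| * |v j| := S.abs_mulVec_apply_le_sum v k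
    _ ≤ ∑ j, |S k j| * M := sum_le_sum fun j _ => mul_le_mul_of_nonneg_left (hv j) (abs_nonneg _)
    _ = (∑ j, |S k j|) * M := (sum_mul _ _ _).symm
    _ ≤ r * M := mul_le_mul_of_nonneg_right hk hM

theorem Matrix.abs_mulVec_apply_lt (hk : ∑ j, |S k j| ≤ r) (hv : ∀ j, |v j| ≤ M) (hM : 0 ≤ M)
    {j : ι} (hSj : S k j ≠ 0) (hvj : |v j| < M) : |(S *ᵥ v) k| < r * M :=
  calc |(S *ᵥ v) k| ≤ ∑ j, |S k j| * |v j| := S.abs_mulVec_apply_le_sum v k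
    _ < ∑ j, |S k j| * M :=
        sum_lt_sum (fun j _ => mul_le_mul_of_nonneg_left (hv j) (abs_nonneg _))
          ⟨j, mem_univ j, mul_lt_mul_of_pos_left hvj (abs_pos.mpr hSj)⟩
    _ = (∑ j, |S k j|) * M := (sum_mul _ _ _).symm
    _ ≤ r * M := mul_le_mul_of_nonneg_right hk hM

end RowBound

section AbsoluteValueEquation

variable {ι : Type*} [Fintype ι] {S : Matrix ι ι ℝ} {z c : ι → ℝ} {i m : ι}

theorem abs_mulVec_abs_apply_le_half (hS : ∀ k, ∑ j, |S k j| ≤ 1 / 2)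
    (hm : ∀ j, |z j| ≤ |z m|) (k : ι) : |(S *ᵥ fun j => |z j|) k| ≤ |z m| / 2 := by
  have := abs_mulVec_apply_le_s12 (v := fun j => |z j|) (hS k) (by simpa using hm) (abs_nonneg _)
  linarith

theorem abs_max_le_add_abs_mulVec_apply (h : z - S *ᵥ (fun j => |z j|) = c)
    (hc : ∀ k, |c k| ≤ |c i|) (k : ι) (hk : |z k| = |z m|) :
    |z m| ≤ |c i| + |(S *ᵥ fun j => |z j|) k| := by
  have hz : z k = c k + (S *ᵥ fun j => |z j|) k := congrFun (sub_eq_iff_eq_add.mp h) k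
  calc |z m| = |c k + (S *ᵥ fun j => |z j|) k| := by rw [← hk, ← hz]
    _ ≤ |c k| + |(S *ᵥ fun j => |z j|) k| := abs_add_le _ _
    _ ≤ |c i| + |(S *ᵥ fun j => |z j|) k| := add_le_add_left (hc k) _

variable (hS : ∀ k, ∑ j, |S k j| ≤ 1 / 2) (h : z - S *ᵥ (fun j => |z j|) = c)
  (hc : ∀ k, |c k| ≤ |c i|) (hm : ∀ j, |z j| ≤ |z m|)
include hS h hc hm

theorem abs_max_le_two_mul : |z m| ≤ 2 * |c i| := by
  linarith [abs_max_le_add_abs_mulVec_apply h hc m rfl, abs_mulVec_abs_apply_le_half hS hm m]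

theorem abs_sub_le_abs_of_abs_max : |z i - c i| ≤ |c i| := by
  have hw : z i - c i = (S *ᵥ fun j => |z j|) i := by
    rw [← congrFun h i, Pi.sub_apply, sub_sub_cancel]
  rw [hw]
  linarith [abs_mulVec_abs_apply_le_half hS hm i, abs_max_le_two_mul hS h hc hm]

theorem abs_eq_of_abs_max_eq_two_mul (hirr : ∀ J : Finset ι, J.Nonempty → J ≠ univ →
      ∃ i ∈ J, ∃ j ∉ J, S i j ≠ 0) (htight : |z m| = 2 * |c i|) (j : ι) : |z j| = |z m| := by
  refine S.forall_of_irreducible hirr (P := fun j => |z j| = |z m|) ⟨m, rfl⟩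
    (fun k j hk hSkj => ?_) j
  by_contra hne
  have hlt := abs_mulVec_apply_lt (v := fun j => |z j|) (hS k) (by simpa using hm)
    (abs_nonneg _) hSkj (by simpa using lt_of_le_of_ne (hm j) hne)
  linarith [abs_max_le_add_abs_mulVec_apply h hc k hk]

theorem ne_zero_of_abs_max (hirr : ∀ J : Finset ι, J.Nonempty → J ≠ univ →
      ∃ i ∈ J, ∃ j ∉ J, S i j ≠ 0) (hci : c i ≠ 0) : z i ≠ 0 := by
  intro hzi
  have hw : |c i| ≤ |z m| / 2 := by
    rw [← congrFun h i, Pi.sub_apply, hzi, zero_sub, abs_neg]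
    exact abs_mulVec_abs_apply_le_half hS hm i
  have htight : |z m| = 2 * |c i| := by linarith [abs_max_le_two_mul hS h hc hm]
  have hzi_max := abs_eq_of_abs_max_eq_two_mul hS h hc hm hirr htight i
  rw [hzi, abs_zero, htight] at hzi_max
  exact hci (abs_eq_zero.mp (by linarith))

end AbsoluteValueEquation

theorem stmt_12 {n : ℕ} (S : Matrix (Fin n) (Fin n) ℝ)
    (hirr : ∀ J : Finset (Fin n), J.Nonempty → J ≠ Finset.univ →
      ∃ i ∈ J, ∃ j ∉ J, S i j ≠ 0)
    (hS : ∀ i, ∑ j, |S i j| ≤ 1 / 2) (z c : Fin n → ℝ)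
    (h : z - S.mulVec (fun i => |z i|) = c) :
    ∀ i, (∀ k, |c k| ≤ |c i|) → Real.sign (z i) = Real.sign (c i) := by
  intro i hc
  obtain ⟨m, -, hm⟩ := exists_max_image univ (fun j => |z j|) ⟨i, mem_univ i⟩
  replace hm : ∀ j, |z j| ≤ |z m| := fun j => hm j (mem_univ j)
  exact Real.sign_eq_sign_of_abs_sub_le (abs_sub_le_abs_of_abs_max hS h hc hm)
    (ne_zero_of_abs_max hS h hc hm hirr)
end

section
/- Let S be a strictly diagonally dominant real n×n matrix with ‖S‖∞ ≤ 2/3, and let z, ĉ ∈ ℝⁿ satisfy z − S|z| = ĉ. Then for every index i with |ĉ_i| = max_k |ĉ_k|, it holds that sign(z_i) = sign(ĉ_i). -/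
/-!
Write `z = c + S |z|`. Evaluating at an index where `|z|` is maximal shows
`|z_k| ≤ 3 max |c|` for every `k`. At an index `i` with `|c_i|` maximal, moving the diagonal term
to the left gives `z_i - S_ii |z_i| = c_i + r` with `|r| ≤ 3 (∑_{j ≠ i} |S_ij|) |c_i|`, and
diagonal dominance together with `‖S‖∞ ≤ 2/3` makes the off-diagonal row sum smaller than `1/3`,
so `c_i + r` has the sign of `c_i`. Since `|S_ii| < 1`, the map `t ↦ t - S_ii |t|` preserves signs.
-/

open Finset

namespace Real

theorem sign_sub_mul_abs {a : ℝ} (ha : |a| < 1) (t : ℝ) : sign (t - a * |t|) = sign t := by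
  obtain ⟨ha₁, ha₂⟩ := abs_lt.mp ha
  rcases lt_trichotomy t 0 with ht | rfl | ht
  · rw [abs_of_neg ht, sign_of_neg ht, sign_of_neg (by nlinarith)]
  · simp
  · rw [abs_of_pos ht, sign_of_pos ht, sign_of_pos (by nlinarith)]

theorem sign_add_of_abs_le {θ c r : ℝ} (hθ : θ < 1) (hr : |r| ≤ θ * |c|) :
    sign (c + r) = sign c := by
  obtain ⟨hr₁, hr₂⟩ := abs_le.mp hr
  rcases lt_trichotomy c 0 with hc | rfl | hc
  · rw [abs_of_neg hc] at hr₁ hr₂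
    rw [sign_of_neg hc, sign_of_neg (by nlinarith)]
  · obtain rfl : r = 0 := abs_nonpos_iff.mp (by simpa using hr)
    simp
  · rw [abs_of_pos hc] at hr₁ hr₂
    rw [sign_of_pos hc, sign_of_pos (by nlinarith)]

end Real

theorem abs_sum_mul_le_of_abs_le {ι : Type*} {s : Finset ι} {a x : ι → ℝ} {B : ℝ}
    (hx : ∀ j ∈ s, |x j| ≤ B) : |∑ j ∈ s, a j * x j| ≤ (∑ j ∈ s, |a j|) * B :=
  calc |∑ j ∈ s, a j * x j| ≤ ∑ j ∈ s, |a j * x j| := abs_sum_le_sum_abs _ _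
    _ ≤ ∑ j ∈ s, |a j| * B := sum_le_sum fun j hj => by
        rw [abs_mul]; exact mul_le_mul_of_nonneg_left (hx j hj) (abs_nonneg _)
    _ = (∑ j ∈ s, |a j|) * B := (sum_mul _ _ _).symm

theorem Matrix.mul_abs_le_of_sub_mulVec_abs_eq {ι : Type*} [Fintype ι] {q B : ℝ}
    {S : Matrix ι ι ℝ} {z c : ι → ℝ} (hS : ∀ i, ∑ j, |S i j| ≤ q) (hq : q ≤ 1)
    (h : z - S.mulVec (fun i => |z i|) = c) (hc : ∀ k, |c k| ≤ B) (k : ι) :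
    (1 - q) * |z k| ≤ B := by
  obtain ⟨m, -, hm⟩ := exists_max_image univ (fun k => |z k|) ⟨k, mem_univ k⟩
  have hzm : ∀ j, |z j| ≤ |z m| := fun j => hm j (mem_univ j)
  have hz : z m = c m + ∑ j, S m j * |z j| := by
    rw [← h]; simp [Matrix.mulVec, dotProduct]
  have hrow : |(∑ j, S m j * |z j|)| ≤ q * |z m| :=
    (abs_sum_mul_le_of_abs_le fun j _ => (abs_abs _).trans_le (hzm j)).trans
      (mul_le_mul_of_nonneg_right (hS m) (abs_nonneg _))
  have hzm_le : |z m| ≤ |c m| + q * |z m| :=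
    calc |z m| ≤ |c m| + |(∑ j, S m j * |z j|)| := hz ▸ abs_add_le _ _
      _ ≤ |c m| + q * |z m| := add_le_add_right hrow _
  nlinarith [hc m, hzm k]

theorem stmt_13 {n : ℕ} (S : Matrix (Fin n) (Fin n) ℝ)
    (hsdd : ∀ i, ∑ j ∈ Finset.univ.erase i, |S i j| < |S i i|)
    (hS : ∀ i, ∑ j, |S i j| ≤ 2 / 3) (z c : Fin n → ℝ)
    (h : z - S.mulVec (fun i => |z i|) = c) :
    ∀ i, (∀ k, |c k| ≤ |c i|) → Real.sign (z i) = Real.sign (c i) := by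
  intro i hi
  set off := ∑ j ∈ univ.erase i, |S i j|
  set r := ∑ j ∈ univ.erase i, S i j * |z j|
  have hsplit : |S i i| + off = ∑ j, |S i j| := add_sum_erase _ (fun j => |S i j|) (mem_univ i)
  have hoff : 3 * off < 1 := by linarith [hsdd i, hS i]
  have hSii : |S i i| < 1 := by
    linarith [hsdd i, hS i, sum_nonneg fun j (_ : j ∈ univ.erase i) => abs_nonneg (S i j)]
  have hzc : z i - S i i * |z i| = c i + r := by
    have := congrFun h i
    simp only [Pi.sub_apply, Matrix.mulVec, dotProduct] at this
    rw [← add_sum_erase _ (fun j => S i j * |z j|) (mem_univ i)] at this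
    linarith
  have hz : ∀ k, |z k| ≤ 3 * |c i| := fun k => by
    linarith [Matrix.mul_abs_le_of_sub_mulVec_abs_eq hS (by norm_num) h hi k]
  have hr : |r| ≤ 3 * off * |c i| :=
    (abs_sum_mul_le_of_abs_le fun j _ => (abs_abs _).trans_le (hz j)).trans_eq (by ring)
  rw [← Real.sign_sub_mul_abs hSii, hzc]
  exact Real.sign_add_of_abs_le hoff hr
end

section
/- Let S be a real (n+1)×(n+1) matrix with ‖S‖∞ ≤ ξ < 1, and let σ ∈ {+1, −1}. Define the n×n matrix S̄ by S̄_ij = S_{(i+1)(j+1)} − σ · S_{(i+1)0} · S_{0(j+1)} / (1 − σ · S_{00}) for i, j ∈ {0, …, n−1} (the matrix arising from one step of Gaussian elimination on I − SΣ with first sign σ; note 1 − σ·S_{00} > 0 since |S_{00}| < 1). Then ‖S̄‖∞ ≤ ξ. -/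
/-! Row `i` of `S̄` is row `i + 1` of `S` minus `c = σ S_{i+1,0} / (1 - σ S_{00})` times the
tail of row `0`. Writing `C` for the tail mass of row `0`, we have `C ≤ ξ - |S_{00}| < 1 - σ S_{00}`,
so `|c| C ≤ |S_{i+1,0}|`: the mass added to the tail of row `i + 1` is at most the mass of its
deleted first entry. -/

open Finset

lemma sum_abs_sub_mul_le {ι : Type*} [Fintype ι] (r u : ι → ℝ) (c : ℝ) :
    ∑ j, |r j - c * u j| ≤ ∑ j, |r j| + |c| * ∑ j, |u j| := by
  rw [mul_sum, ← sum_add_distrib]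
  gcongr with j
  exact (abs_sub _ _).trans_eq (by rw [abs_mul])

lemma abs_mul_div_one_sub_mul_mul_le {σ a b C : ℝ} (hσ : |σ| ≤ 1) (hC : 0 ≤ C)
    (haC : |a| + C < 1) : |σ * b / (1 - σ * a)| * C ≤ |b| := by
  have hσa : σ * a ≤ |a| :=
    (le_abs_self _).trans (by rw [abs_mul]; exact mul_le_of_le_one_left (abs_nonneg a) hσ)
  have hD : 0 < 1 - σ * a := by linarith
  rw [abs_div, abs_of_pos hD, div_mul_eq_mul_div, div_le_iff₀ hD, abs_mul]
  calc |σ| * |b| * C ≤ |b| * C := by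
        gcongr
        exact mul_le_of_le_one_left (abs_nonneg b) hσ
    _ ≤ |b| * (1 - σ * a) := by gcongr; linarith

lemma sum_abs_sub_mul_div_one_sub_mul_le {ι : Type*} [Fintype ι] {ξ σ a b : ℝ} {r u : ι → ℝ}
    (hσ : |σ| ≤ 1) (hξ : ξ < 1) (hu : |a| + ∑ j, |u j| ≤ ξ) (hr : |b| + ∑ j, |r j| ≤ ξ) :
    ∑ j, |r j - σ * b * u j / (1 - σ * a)| ≤ ξ := by
  have hC : 0 ≤ ∑ j, |u j| := sum_nonneg fun j _ => abs_nonneg (u j)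
  have hc := abs_mul_div_one_sub_mul_mul_le (a := a) (b := b) hσ hC (by linarith)
  calc ∑ j, |r j - σ * b * u j / (1 - σ * a)|
      = ∑ j, |r j - σ * b / (1 - σ * a) * u j| := by simp only [mul_div_right_comm]
    _ ≤ ∑ j, |r j| + |σ * b / (1 - σ * a)| * ∑ j, |u j| := sum_abs_sub_mul_le _ _ _
    _ ≤ ξ := by linarith

theorem stmt_15 {n : ℕ} (S : Matrix (Fin (n + 1)) (Fin (n + 1)) ℝ) (ξ : ℝ)
    (hS : ∀ i, ∑ j, |S i j| ≤ ξ) (hξ : ξ < 1)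
    (σ : ℝ) (hσ : σ = 1 ∨ σ = -1)
    (Sb : Matrix (Fin n) (Fin n) ℝ)
    (hSb : ∀ i j : Fin n,
      Sb i j = S i.succ j.succ - σ * S i.succ 0 * S 0 j.succ / (1 - σ * S 0 0)) :
    ∀ i, ∑ j, |Sb i j| ≤ ξ := by
  intro i
  have hσ_abs : |σ| ≤ 1 := by rcases hσ with rfl | rfl <;> simp
  have hrow (k : Fin (n + 1)) : |S k 0| + ∑ j : Fin n, |S k j.succ| ≤ ξ := by
    simpa only [Fin.sum_univ_succ] using hS k
  simp only [hSb]
  exact sum_abs_sub_mul_div_one_sub_mul_le hσ_abs hξ (hrow 0) (hrow i.succ)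
end

section
/- Let S be a real (n+1)×(n+1) matrix with ‖S‖∞ < 1 that is strictly diagonally dominant, and let σ ∈ {+1, −1}. Define the n×n matrix S̄ by S̄_ij = S_{(i+1)(j+1)} − σ · S_{(i+1)0} · S_{0(j+1)} / (1 − σ · S_{00}) for i, j ∈ {0, …, n−1}. Then S̄ is strictly diagonally dominant. -/
/-! Write `d = 1 - σ S₀₀`. Since `‖S‖∞ < 1`, the off-pivot entries of row `0` have absolute sum
below `d`, so `S̄ = A - x yᵀ`, with `A` the trailing block, `x_i = σ S_{(i+1)0} / d` and
`y_j = S_{0(j+1)}`, satisfies `|x_i| ∑_j |y_j| ≤ |S_{(i+1)0}|`. A rank-one update of this size costs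
row `i` of `A` at most `|S_{(i+1)0}|` of diagonal dominance, which is exactly the column-`0` term
that strict dominance of row `i + 1` of `S` has to spare. -/

open Finset Matrix

lemma Fin.sum_univ_erase_succ {M : Type*} [AddCommGroup M] {n : ℕ} (f : Fin (n + 1) → M)
    (i : Fin n) : ∑ j ∈ univ.erase i.succ, f j = f 0 + ∑ j ∈ univ.erase i, f j.succ := by
  rw [sum_erase_eq_sub (mem_univ _), sum_erase_eq_sub (mem_univ _), Fin.sum_univ_succ]
  abel

lemma Matrix.sub_vecMulVec_row_diagDominant {ι : Type*} [Fintype ι] [DecidableEq ι]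
    {A : Matrix ι ι ℝ} {x y : ι → ℝ} {i : ι}
    (h : ∑ j ∈ univ.erase i, |A i j| + |x i| * ∑ j, |y j| < |A i i|) :
    ∑ j ∈ univ.erase i, |(A - vecMulVec x y) i j| < |(A - vecMulVec x y) i i| := by
  simp only [sub_apply, vecMulVec_apply]
  have hoff : ∑ j ∈ univ.erase i, |A i j - x i * y j|
      ≤ ∑ j ∈ univ.erase i, |A i j| + |x i| * ∑ j ∈ univ.erase i, |y j| := by
    rw [mul_sum, ← sum_add_distrib]
    exact sum_le_sum fun j _ => (abs_sub _ _).trans_eq (by rw [abs_mul])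
  have hdiag : |A i i| - |x i| * |y i| ≤ |A i i - x i * y i| := by
    rw [← abs_mul]
    exact abs_sub_abs_le_abs_sub _ _
  rw [← sum_erase_add _ _ (mem_univ i), mul_add] at h
  linarith

lemma Matrix.sum_abs_pivot_row_succ_lt {n : ℕ} (S : Matrix (Fin (n + 1)) (Fin (n + 1)) ℝ)
    (hS : ∑ j, |S 0 j| < 1) {σ : ℝ} (hσ : |σ| ≤ 1) :
    ∑ j : Fin n, |S 0 j.succ| < 1 - σ * S 0 0 := by
  rw [Fin.sum_univ_succ] at hS
  have : σ * S 0 0 ≤ |S 0 0| :=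
    (le_abs_self _).trans <| by rw [abs_mul]; exact mul_le_of_le_one_left (abs_nonneg _) hσ
  linarith

theorem stmt_16 {n : ℕ} (S : Matrix (Fin (n + 1)) (Fin (n + 1)) ℝ)
    (hS : ∀ i, ∑ j, |S i j| < 1)
    (hsdd : ∀ i, ∑ j ∈ Finset.univ.erase i, |S i j| < |S i i|)
    (σ : ℝ) (hσ : σ = 1 ∨ σ = -1)
    (Sb : Matrix (Fin n) (Fin n) ℝ)
    (hSb : ∀ i j : Fin n,
      Sb i j = S i.succ j.succ - σ * S i.succ 0 * S 0 j.succ / (1 - σ * S 0 0)) :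
    ∀ i, ∑ j ∈ Finset.univ.erase i, |Sb i j| < |Sb i i| := by
  have hσ1 : |σ| ≤ 1 := by rcases hσ with rfl | rfl <;> simp
  set d := 1 - σ * S 0 0
  have hrow0 : ∑ j : Fin n, |S 0 j.succ| < d := S.sum_abs_pivot_row_succ_lt (hS 0) hσ1
  have hd : 0 < d := (sum_nonneg fun j _ => abs_nonneg _).trans_lt hrow0
  have hSb' : Sb = S.submatrix Fin.succ Fin.succ
      - vecMulVec (fun i => σ * S i.succ 0 / d) (fun j => S 0 j.succ) := by
    ext i j
    rw [hSb, Matrix.sub_apply, vecMulVec_apply, submatrix_apply]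
    ring
  intro i
  rw [hSb']
  refine sub_vecMulVec_row_diagDominant ?_
  have hrow := hsdd i.succ
  rw [Fin.sum_univ_erase_succ] at hrow
  have hx : |σ * S i.succ 0 / d| * ∑ j : Fin n, |S 0 j.succ| ≤ |S i.succ 0| :=
    calc |σ * S i.succ 0 / d| * ∑ j : Fin n, |S 0 j.succ|
        ≤ |S i.succ 0| / d * d := by
          rw [abs_div, abs_mul, abs_of_pos hd]
          gcongr
          exact mul_le_of_le_one_left (abs_nonneg _) hσ1
      _ = |S i.succ 0| := div_mul_cancel₀ _ hd.ne'
  simp only [submatrix_apply]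
  linarith
end

section
/- For every n ≥ 2 there exist a strictly diagonally dominant real n×n matrix S with ‖S‖∞ = 2/3 + 1/(3(n+1)) and a vector z ∈ ℝⁿ such that, setting ĉ = z − S|z|, one has z_1 > 0, ĉ_1 < 0, and |ĉ_1| > |ĉ_j| for all j ≠ 1 (so the entry of ĉ of maximal absolute value has a sign different from the corresponding entry of z, which is nonzero). In particular, the norm bound 2/3 in the sign-coincidence result for strictly diagonally dominant matrices cannot be relaxed to 2/3 + 1/(3(n+1)). -/
/-!
A single off-diagonal entry suffices. Take `S` diagonal with entry `β` except in row `i₀`, which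
is `a` on the diagonal and `δ` in some other column `j₁`, with `a + δ = β` and `δ < a`, and let
`z` be `1` off `i₀` and a small `t > 0` at `i₀`. Then `ĉ = z - S|z|` is `1 - β` off `i₀` and
`t (1 - a) - δ ≈ -δ` at `i₀`. Diagonal dominance only forces `δ < β / 2`, so `δ` can be taken
above `1 - β` as soon as `β / 2 > 1 - β`, i.e. `β > 2/3`.
-/

open Finset Matrix

namespace SignMismatch

variable {ι : Type*} [DecidableEq ι] (i₀ j₁ : ι)

def matrix (a δ b : ℝ) : Matrix ι ι ℝ :=
  Function.update (fun i => Pi.single i b) i₀ (Pi.single i₀ a + Pi.single j₁ δ)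

def vector (t : ℝ) : ι → ℝ :=
  Function.update 1 i₀ t

variable {i₀ j₁} {a δ b : ℝ}

lemma matrix_row_self : matrix i₀ j₁ a δ b i₀ = Pi.single i₀ a + Pi.single j₁ δ :=
  Function.update_self ..

lemma matrix_row_of_ne {i : ι} (hi : i ≠ i₀) : matrix i₀ j₁ a δ b i = Pi.single i b :=
  Function.update_of_ne hi ..

lemma matrix_nonneg (ha : 0 ≤ a) (hδ : 0 ≤ δ) (hb : 0 ≤ b) (i j : ι) :
    0 ≤ matrix i₀ j₁ a δ b i j := by
  have single_nonneg {k : ι} {x : ℝ} (hx : 0 ≤ x) : 0 ≤ (Pi.single k x : ι → ℝ) j := by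
    rw [Pi.single_apply]; split_ifs <;> simp [hx]
  by_cases hi : i = i₀
  · rw [hi, matrix_row_self]
    exact add_nonneg (single_nonneg ha) (single_nonneg hδ)
  · rw [matrix_row_of_ne hi]
    exact single_nonneg hb

lemma sum_matrix_row_self (s : Finset ι) :
    ∑ j ∈ s, matrix i₀ j₁ a δ b i₀ j = (if i₀ ∈ s then a else 0) + (if j₁ ∈ s then δ else 0) := by
  simp only [matrix_row_self, Pi.add_apply, sum_add_distrib, sum_pi_single']

lemma sum_matrix_row_of_ne {i : ι} (hi : i ≠ i₀) (s : Finset ι) :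
    ∑ j ∈ s, matrix i₀ j₁ a δ b i j = if i ∈ s then b else 0 := by
  simp only [matrix_row_of_ne hi, sum_pi_single']

lemma matrix_apply_diag (hj₁ : j₁ ≠ i₀) (i : ι) :
    matrix i₀ j₁ a δ b i i = if i = i₀ then a else b := by
  by_cases hi : i = i₀
  · simp [hi, matrix_row_self, hj₁.symm]
  · simp [hi, matrix_row_of_ne hi]

variable {t : ℝ}

lemma vector_self : vector i₀ t i₀ = t :=
  Function.update_self ..

lemma vector_of_ne {i : ι} (hi : i ≠ i₀) : vector i₀ t i = 1 :=
  Function.update_of_ne hi ..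

lemma abs_vector (ht : 0 < t) : (fun i => |vector i₀ t i|) = vector i₀ t := by
  funext i
  refine abs_of_pos ?_
  by_cases hi : i = i₀
  · rwa [hi, vector_self]
  · rw [vector_of_ne hi]
    exact one_pos

variable [Fintype ι]

lemma sum_erase_matrix_row (hj₁ : j₁ ≠ i₀) (i : ι) :
    ∑ j ∈ univ.erase i, matrix i₀ j₁ a δ b i j = if i = i₀ then δ else 0 := by
  by_cases hi : i = i₀
  · rw [hi, sum_matrix_row_self]
    simp [hj₁]
  · rw [sum_matrix_row_of_ne hi]
    simp [hi]

lemma sum_matrix_row (hj₁ : j₁ ≠ i₀) (i : ι) :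
    ∑ j, matrix i₀ j₁ a δ b i j = if i = i₀ then a + δ else b := by
  rw [← add_sum_erase _ _ (mem_univ i), matrix_apply_diag hj₁, sum_erase_matrix_row hj₁]
  split_ifs <;> simp

lemma matrix_mulVec_vector_self (hj₁ : j₁ ≠ i₀) :
    (matrix i₀ j₁ a δ b *ᵥ vector i₀ t) i₀ = a * t + δ := by
  simp only [mulVec, matrix_row_self, add_dotProduct, single_dotProduct, vector_self,
    vector_of_ne hj₁, mul_one]

lemma matrix_mulVec_vector_of_ne {i : ι} (hi : i ≠ i₀) :
    (matrix i₀ j₁ a δ b *ᵥ vector i₀ t) i = b := by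
  simp only [mulVec, matrix_row_of_ne hi, single_dotProduct, vector_of_ne hi, mul_one]

lemma sum_abs_matrix_row (ha : 0 ≤ a) (hδ : 0 ≤ δ) (hb : 0 ≤ b) (hj₁ : j₁ ≠ i₀) (i : ι) :
    ∑ j, |matrix i₀ j₁ a δ b i j| = if i = i₀ then a + δ else b := by
  simp only [abs_of_nonneg (matrix_nonneg ha hδ hb i _), sum_matrix_row hj₁]

lemma sum_erase_abs_matrix_row_lt (hδ : 0 ≤ δ) (hδa : δ < a) (hb : 0 < b) (hj₁ : j₁ ≠ i₀)
    (i : ι) : ∑ j ∈ univ.erase i, |matrix i₀ j₁ a δ b i j| < |matrix i₀ j₁ a δ b i i| := by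
  have habs (j : ι) : |matrix i₀ j₁ a δ b i j| = matrix i₀ j₁ a δ b i j :=
    abs_of_nonneg (matrix_nonneg (hδ.trans hδa.le) hδ hb.le i j)
  simp only [habs]
  rw [sum_erase_matrix_row hj₁, matrix_apply_diag hj₁]
  split_ifs <;> assumption

end SignMismatch

open SignMismatch in
theorem exists_diagDominant_sign_mismatch {ι : Type*} [Fintype ι] [DecidableEq ι] [Nontrivial ι]
    (i₀ : ι) {β : ℝ} (hβ : 2 / 3 < β) (hβ₁ : β ≤ 1) :
    ∃ (S : Matrix ι ι ℝ) (z : ι → ℝ),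
      (∀ i, ∑ j ∈ univ.erase i, |S i j| < |S i i|) ∧
      (∀ i, ∑ j, |S i j| ≤ β) ∧
      (∃ i, ∑ j, |S i j| = β) ∧
      (∃ c : ι → ℝ, c = z - S *ᵥ (fun i => |z i|) ∧
        0 < z i₀ ∧ c i₀ < 0 ∧ ∀ j, j ≠ i₀ → |c j| < |c i₀|) := by
  obtain ⟨j₁, hj₁⟩ := exists_ne i₀
  -- `δ = (2 - β) / 4` lies strictly between `1 - β` and `β / 2`, `a = β - δ`,
  -- and `t = (3 * β - 2) / 8` keeps `t * (1 - a) < δ - (1 - β)`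
  have ha : 0 ≤ (5 * β - 2) / 4 := by linarith
  have hδ : 0 ≤ (2 - β) / 4 := by linarith
  have ht : 0 < (3 * β - 2) / 8 := by linarith
  have hrow (i : ι) : ∑ j, |matrix i₀ j₁ ((5 * β - 2) / 4) ((2 - β) / 4) β i j| = β := by
    rw [sum_abs_matrix_row ha hδ (by linarith) hj₁]
    split_ifs <;> ring
  refine ⟨_, vector i₀ ((3 * β - 2) / 8),
    sum_erase_abs_matrix_row_lt hδ (by linarith) (by linarith) hj₁,
    fun i => (hrow i).le, ⟨i₀, hrow i₀⟩, _, rfl, ?_, ?_, ?_⟩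
  · rwa [vector_self]
  · rw [abs_vector ht, Pi.sub_apply, matrix_mulVec_vector_self hj₁, vector_self]
    nlinarith
  · intro j hj
    rw [abs_vector ht, Pi.sub_apply, Pi.sub_apply, matrix_mulVec_vector_self hj₁,
      matrix_mulVec_vector_of_ne hj, vector_self, vector_of_ne hj]
    rw [abs_of_nonneg (by linarith), abs_of_neg (by nlinarith)]
    nlinarith

theorem stmt_19 (m : ℕ) :
    ∃ (S : Matrix (Fin (m + 2)) (Fin (m + 2)) ℝ) (z : Fin (m + 2) → ℝ),
      (∀ i, ∑ j ∈ Finset.univ.erase i, |S i j| < |S i i|) ∧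
      (∀ i, ∑ j, |S i j| ≤ 2 / 3 + 1 / (3 * ((m + 2 : ℕ) + 1 : ℝ))) ∧
      (∃ i, ∑ j, |S i j| = 2 / 3 + 1 / (3 * ((m + 2 : ℕ) + 1 : ℝ))) ∧
      (∃ c : Fin (m + 2) → ℝ, c = z - S.mulVec (fun i => |z i|) ∧
        0 < z 0 ∧ c 0 < 0 ∧ ∀ j : Fin (m + 2), j ≠ 0 → |c j| < |c 0|) := by
  have hN : (3 : ℝ) ≤ 3 * ((m + 2 : ℕ) + 1 : ℝ) := by push_cast; linarith
  refine exists_diagDominant_sign_mismatch 0 (lt_add_of_pos_right _ (by positivity)) ?_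
  linarith [one_div_le_one_div_of_le three_pos hN]
end
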